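/- arXiv:math/0602531 — 7 statements merged into one kernel-verified Lean document; each statement's English description precedes it below -/
import Mathlib

section
/- Let K be a simplicial complex, let u ≠ v be two vertices of K, and let d = dim(K). Then no missing face of K of dimension ≤ d contains both u and v if and only if skel_{d−2}(lk(u,K) ∩ lk(v,K)) = lk({u,v},K). -/
open Finset

variable {V : Type*} [DecidableEq V]

/-- A (finite) simplicial complex, given by its finite family of faces:
closed under subsets and containing the empty set.  The vertices of `K` are
exactly the elements `v` with `{v} ∈ K`. -/
def IsComplex (K : Finset (Finset V)) : Prop :=
  ∅ ∈ K ∧ ∀ S ∈ K, ∀ T ⊆ S, T ∈ K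

/-- The dimension of `K` : the maximum of `|F| - 1` over the faces `F` of `K`. -/
def dimC (K : Finset (Finset V)) : ℤ :=
  ((K.sup Finset.card : ℕ) : ℤ) - 1

/-- `T` is a missing face of `K` : a set of vertices of `K` which is not a face of `K`
while all its proper subsets are faces of `K`. -/
def IsMissingFace (K : Finset (Finset V)) (T : Finset V) : Prop :=
  (∀ x ∈ T, ({x} : Finset V) ∈ K) ∧ T ∉ K ∧ ∀ S ⊂ T, S ∈ K

/-- The contraction of `u` onto `v` is admissible if no missing face of `K` of
dimension `≤ dim K` contains both `u` and `v`. -/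
def Admissible (K : Finset (Finset V)) (u v : V) : Prop :=
  ∀ T : Finset V, IsMissingFace K T → (T.card : ℤ) - 1 ≤ dimC K → ¬(u ∈ T ∧ v ∈ T)

/-- The contraction of `u` onto `v`:
`K' = {T ∈ K : u ∉ T} ∪ {(T \ {u}) ∪ {v} : u ∈ T ∈ K}`. -/
def contractC (K : Finset (Finset V)) (u v : V) : Finset (Finset V) :=
  K.filter (fun T => u ∉ T) ∪ (K.filter (fun T => u ∈ T)).image (fun T => insert v (T.erase u))

/-- The link of a face: `lk(S,K) = {T ∈ K : T ∩ S = ∅ ∧ T ∪ S ∈ K}`. -/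
def linkC (K : Finset (Finset V)) (S : Finset V) : Finset (Finset V) :=
  K.filter (fun T => T ∩ S = ∅ ∧ T ∪ S ∈ K)

/-- The `m`-skeleton: all faces of dimension at most `m`. -/
def skelC (K : Finset (Finset V)) (m : ℤ) : Finset (Finset V) :=
  K.filter (fun F => (F.card : ℤ) - 1 ≤ m)

/-!
A face `T` of `lk(u) ∩ lk(v)` lies in `lk({u,v})` unless `T ∪ {u,v}` is a non-face. Any
non-face contains a missing face, and since `T ∪ {u}` and `T ∪ {v}` are faces, every missing
face inside `T ∪ {u,v}` contains both `u` and `v`; its dimension is at most `dim T + 2`, so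
admissibility rules it out when `dim T ≤ d - 2`. Conversely, a missing face `T ∋ u, v` of
dimension `≤ d` yields `T \ {u,v}` in `skel_{d-2}(lk(u) ∩ lk(v))` but not in `lk({u,v})`.
The inclusion `lk({u,v}) ⊆ skel_{d-2}(lk(u) ∩ lk(v))` holds in every complex.
-/

namespace IsComplex

variable {K : Finset (Finset V)}

omit [DecidableEq V] in
theorem mem_of_subset (hK : IsComplex K) {S T : Finset V} (hS : S ∈ K) (hTS : T ⊆ S) :
    T ∈ K :=
  hK.2 S hS T hTS

omit [DecidableEq V] in
theorem singleton_mem (hK : IsComplex K) {F : Finset V} (hF : F ∈ K) {x : V} (hx : x ∈ F) :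
    {x} ∈ K :=
  hK.mem_of_subset hF (singleton_subset_iff.2 hx)

end IsComplex

omit [DecidableEq V] in
theorem card_sub_one_le_dimC {K : Finset (Finset V)} {F : Finset V} (hF : F ∈ K) :
    (F.card : ℤ) - 1 ≤ dimC K := by
  have : F.card ≤ K.sup card := le_sup hF
  unfold dimC
  omega

theorem exists_isMissingFace_subset {K : Finset (Finset V)} {A : Finset V} (hA : A ∉ K)
    (hvert : ∀ x ∈ A, {x} ∈ K) : ∃ S ⊆ A, IsMissingFace K S := by
  obtain ⟨S, ⟨hSA, hSK⟩, hmin⟩ :=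
    wellFounded_lt.has_min {S : Finset V | S ⊆ A ∧ S ∉ K} ⟨A, subset_rfl, hA⟩
  refine ⟨S, hSA, fun x hx => hvert x (hSA hx), hSK, fun R hRS => ?_⟩
  by_contra hRK
  exact hmin R ⟨hRS.subset.trans hSA, hRK⟩ hRS

theorem mem_linkC {K : Finset (Finset V)} {S T : Finset V} :
    T ∈ linkC K S ↔ T ∈ K ∧ Disjoint T S ∧ T ∪ S ∈ K := by
  simp only [linkC, mem_filter, disjoint_iff_inter_eq_empty]

theorem mem_linkC_singleton {K : Finset (Finset V)} {T : Finset V} {u : V} :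
    T ∈ linkC K {u} ↔ T ∈ K ∧ u ∉ T ∧ T ∪ {u} ∈ K := by
  rw [mem_linkC, disjoint_singleton_right]

omit [DecidableEq V] in
theorem mem_skelC {K : Finset (Finset V)} {m : ℤ} {F : Finset V} :
    F ∈ skelC K m ↔ F ∈ K ∧ (F.card : ℤ) - 1 ≤ m := by
  simp only [skelC, mem_filter]

section Pair

variable {K : Finset (Finset V)} {u v : V}

theorem linkC_pair_subset_skelC (hK : IsComplex K) (huv : u ≠ v) :
    linkC K {u, v} ⊆ skelC (linkC K {u} ∩ linkC K {v}) (dimC K - 2) := by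
  intro T hT
  obtain ⟨hTK, hdisj, hTuv⟩ := mem_linkC.1 hT
  have huT : u ∉ T := disjoint_right.1 hdisj (mem_insert_self u {v})
  have hvT : v ∉ T := disjoint_right.1 hdisj (mem_insert_of_mem (mem_singleton_self v))
  have hcard : (T ∪ {u, v}).card = T.card + 2 := by
    rw [card_union_of_disjoint hdisj, card_pair huv]
  have hdim := card_sub_one_le_dimC hTuv
  refine mem_skelC.2 ⟨mem_inter.2 ⟨mem_linkC_singleton.2 ⟨hTK, huT, ?_⟩,
    mem_linkC_singleton.2 ⟨hTK, hvT, ?_⟩⟩, by omega⟩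
  · exact hK.mem_of_subset hTuv (union_subset_union_right (by simp))
  · exact hK.mem_of_subset hTuv (union_subset_union_right (by simp))

theorem IsComplex.mem_of_notMem_of_subset_union_pair (hK : IsComplex K) {S T : Finset V}
    (hS : S ∉ K) (hST : S ⊆ T ∪ {u, v}) (hTv : T ∪ {v} ∈ K) : u ∈ S := by
  by_contra hu
  refine hS (hK.mem_of_subset hTv fun x hx => ?_)
  have hx' := hST hx
  simp only [mem_union, mem_insert, mem_singleton] at hx' ⊢
  rcases hx' with h | rfl | h
  exacts [Or.inl h, absurd hx hu, Or.inr h]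

theorem skelC_subset_linkC_pair (hK : IsComplex K) (hu : {u} ∈ K) (hv : {v} ∈ K)
    (hadm : Admissible K u v) :
    skelC (linkC K {u} ∩ linkC K {v}) (dimC K - 2) ⊆ linkC K {u, v} := by
  intro T hT
  obtain ⟨hTlk, hTdim⟩ := mem_skelC.1 hT
  obtain ⟨⟨hTK, huT, hTu⟩, -, hvT, hTv⟩ :=
    And.imp mem_linkC_singleton.1 mem_linkC_singleton.1 (mem_inter.1 hTlk)
  refine mem_linkC.2 ⟨hTK, ?_, ?_⟩
  · simp [huT, hvT]
  by_contra hTuv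
  have hvert : ∀ x ∈ T ∪ {u, v}, {x} ∈ K := by
    simp only [mem_union, mem_insert, mem_singleton]
    rintro x (hx | rfl | rfl)
    exacts [hK.singleton_mem hTK hx, hu, hv]
  obtain ⟨S, hST, hS⟩ := exists_isMissingFace_subset hTuv hvert
  have hcard : S.card ≤ T.card + 2 :=
    (card_le_card hST).trans ((card_union_le _ _).trans (by grw [card_le_two]))
  exact hadm S hS (by omega) ⟨hK.mem_of_notMem_of_subset_union_pair hS.2.1 hST hTv,
    hK.mem_of_notMem_of_subset_union_pair hS.2.1 (pair_comm u v ▸ hST) hTu⟩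

theorem admissible_of_skelC_subset_linkC_pair (huv : u ≠ v)
    (hsub : skelC (linkC K {u} ∩ linkC K {v}) (dimC K - 2) ⊆ linkC K {u, v}) :
    Admissible K u v := by
  rintro T hT hTdim ⟨huT, hvT⟩
  have hpair : {u, v} ⊆ T := insert_subset huT (singleton_subset_iff.2 hvT)
  set S := T \ {u, v}
  have hproper : ∀ w ∈ ({u, v} : Finset V), S ∪ {w} ∈ K := by
    intro w hw
    refine hT.2.2 _ ((ssubset_iff_of_subset ?_).2 ?_)
    · exact union_subset sdiff_subset (singleton_subset_iff.2 (hpair hw))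
    · rcases mem_insert.1 hw with rfl | hw
      · exact ⟨v, hvT, by simp [S, huv.symm]⟩
      · exact ⟨u, huT, by simp [S, mem_singleton.1 hw, huv]⟩
  have hSK : S ∈ K := hT.2.2 S (sdiff_ssubset hpair (insert_nonempty u {v}))
  have hcard : S.card + 2 = T.card := by
    have := card_le_card hpair
    rw [card_sdiff_of_subset hpair, card_pair huv] at *
    omega
  have hSskel : S ∈ skelC (linkC K {u} ∩ linkC K {v}) (dimC K - 2) :=
    mem_skelC.2 ⟨mem_inter.2 ⟨mem_linkC_singleton.2 ⟨hSK, by simp [S], hproper u (by simp)⟩,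
      mem_linkC_singleton.2 ⟨hSK, by simp [S], hproper v (by simp)⟩⟩, by omega⟩
  exact hT.2.1 (sdiff_union_of_subset hpair ▸ (mem_linkC.1 (hsub hSskel)).2.2)

end Pair

/-- For distinct vertices `u ≠ v` of a simplicial complex `K` with
`d = dim K`, no missing face of `K` of dimension `≤ d` contains both `u` and `v`
iff `skel_{d-2}(lk(u,K) ∩ lk(v,K)) = lk({u,v},K)`. -/
theorem admissibility_iff_skeleton_link_condition
    (K : Finset (Finset V)) (hK : IsComplex K) (u v : V)
    (hu : ({u} : Finset V) ∈ K) (hv : ({v} : Finset V) ∈ K) (huv : u ≠ v) :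
    (∀ T : Finset V, IsMissingFace K T → (T.card : ℤ) - 1 ≤ dimC K → ¬(u ∈ T ∧ v ∈ T)) ↔
      skelC (linkC K {u} ∩ linkC K {v}) (dimC K - 2) = linkC K {u, v} :=
  ⟨fun hadm => (skelC_subset_linkC_pair hK hu hv hadm).antisymm (linkC_pair_subset_skelC hK huv),
    fun heq => admissible_of_skelC_subset_linkC_pair huv heq.subset⟩
end

section
/- Let K be a simplicial complex and let {u,v} be an edge of K satisfying the Link Condition. Then the contraction of u onto v is admissible, i.e., no missing face of K of dimension ≤ dim(K) contains both u and v. -/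
open Finset

variable {V : Type*} [DecidableEq V]

/-! If a missing face `T` contained `u` and `v`, then `S = T \ {u, v}` would lie in
`lk(u) ∩ lk(v)`, since `S`, `S ∪ {u}` and `S ∪ {v}` are proper subsets of `T`.
The Link Condition puts `S` in `lk({u, v})`, so `T = S ∪ {u, v}` would be a face. -/

lemma union_mem_of_mem_linkC {K : Finset (Finset V)} {S T : Finset V} (h : T ∈ linkC K S) :
    T ∪ S ∈ K :=
  (mem_filter.1 h).2.2

lemma sdiff_pair_mem_linkC_singleton {K : Finset (Finset V)} {T : Finset V} {w w' : V}
    (hproper : ∀ S ⊂ T, S ∈ K) (hw : w ∈ T) (hw' : w' ∈ T) (hne : w ≠ w') :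
    T \ {w, w'} ∈ linkC K {w} := by
  have hsub : T \ {w, w'} ⊆ T := sdiff_subset
  have hsub_w : T \ {w, w'} ∪ {w} ⊆ T := union_subset hsub (singleton_subset_iff.2 hw)
  refine mem_filter.2 ⟨hproper _ ?_, ?_, hproper _ ?_⟩
  · exact (ssubset_iff_of_subset hsub).2 ⟨w, hw, by simp⟩
  · ext x
    simp +contextual
  · exact (ssubset_iff_of_subset hsub_w).2 ⟨w', hw', by simp [hne.symm]⟩

theorem linkCondition_implies_admissible_general
    (K : Finset (Finset V)) (u v : V) (huv : u ≠ v)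
    (hLC : linkC K {u} ∩ linkC K {v} = linkC K {u, v}) :
    Admissible K u v := by
  rintro T ⟨-, hTK, hproper⟩ - ⟨huT, hvT⟩
  have hu : T \ {u, v} ∈ linkC K {u} := sdiff_pair_mem_linkC_singleton hproper huT hvT huv
  have hv : T \ {u, v} ∈ linkC K {v} := by
    rw [pair_comm]
    exact sdiff_pair_mem_linkC_singleton hproper hvT huT huv.symm
  have huv_link : T \ {u, v} ∈ linkC K {u, v} := hLC ▸ mem_inter.2 ⟨hu, hv⟩
  have hpair : ({u, v} : Finset V) ⊆ T := insert_subset huT (singleton_subset_iff.2 hvT)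
  exact hTK (sdiff_union_of_subset hpair ▸ union_mem_of_mem_linkC huv_link)

/-- If the edge `{u,v}` of `K` satisfies the Link Condition
`lk(u,K) ∩ lk(v,K) = lk({u,v},K)`, then the contraction of `u` onto `v` is admissible. -/
theorem linkCondition_implies_admissible
    (K : Finset (Finset V)) (hK : IsComplex K) (u v : V) (huv : u ≠ v)
    (he : ({u, v} : Finset V) ∈ K)
    (hLC : linkC K {u} ∩ linkC K {v} = linkC K {u, v}) :
    Admissible K u v :=
  linkCondition_implies_admissible_general K u v huv hLC
end

section
/- Let K' be obtained from the simplicial complex K by an admissible contraction of v0 onto v1. Let F ∈ K' with F ∉ K, and let x ∈ F. Then F \ {x} ∈ K if and only if (F \ {x}) ∪ {v0} ∈ K. -/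
open Finset

variable {V : Type*} [DecidableEq V]

/-- Let `K'` be obtained from `K` by an admissible contraction of
`v0` onto `v1`, let `F ∈ K'` with `F ∉ K` and `x ∈ F`.  Then
`F \ {x} ∈ K` iff `(F \ {x}) ∪ {v0} ∈ K`. -/
theorem erase_mem_iff_insert_erase_mem
    (K : Finset (Finset V)) (hK : IsComplex K) (v0 v1 : V) (hne : v0 ≠ v1)
    (h0 : ({v0} : Finset V) ∈ K) (h1 : ({v1} : Finset V) ∈ K)
    (hadm : Admissible K v0 v1)
    (F : Finset V) (hF : F ∈ contractC K v0 v1) (hFK : F ∉ K)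
    (x : V) (hx : x ∈ F) :
    F.erase x ∈ K ↔ insert v0 (F.erase x) ∈ K := by
  -- Extract the preimage T
  obtain ⟨T, hTK, hv0T, hFT⟩ : ∃ T, T ∈ K ∧ v0 ∈ T ∧ F = insert v1 (T.erase v0) := by
    rw [contractC, mem_union] at hF
    rcases hF with hF | hF
    · exact absurd (mem_filter.mp hF).1 hFK
    · obtain ⟨T, hT, hTF⟩ := mem_image.mp hF
      exact ⟨T, (mem_filter.mp hT).1, (mem_filter.mp hT).2, hTF.symm⟩
  have hv1T : v1 ∉ T := by
    intro hv1
    apply hFK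
    apply hK.2 T hTK
    rw [hFT]
    intro y hy
    rcases mem_insert.mp hy with rfl | hy
    · exact hv1
    · exact mem_of_mem_erase hy
  have hv0F : v0 ∉ F := by
    rw [hFT]
    simp [hne, notMem_erase]
  have hFe : F.erase v1 = T.erase v0 := by
    rw [hFT, erase_insert]
    rw [mem_erase]; exact fun h => hv1T h.2
  have hTF' : insert v0 (F.erase v1) = T := by
    rw [hFe, insert_erase hv0T]
  constructor
  · intro hG
    by_cases hxv1 : x = v1
    · subst hxv1; rw [hTF']; exact hTK
    · by_contra hnot
      -- find a minimal non-face M ⊆ insert v0 (F.erase x)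
      set S := insert v0 (F.erase x) with hS
      have hSne : (S.powerset.filter (fun M => M ∉ K)).Nonempty :=
        ⟨S, mem_filter.mpr ⟨mem_powerset.mpr Subset.rfl, hnot⟩⟩
      obtain ⟨M, hMmem, hMmin⟩ : ∃ m ∈ S.powerset.filter (fun M => M ∉ K), ∀ y ∈ S.powerset.filter (fun M => M ∉ K), ¬y < m := by
        obtain ⟨m, hm⟩ := Finset.exists_minimal hSne
        exact ⟨m, hm.1, fun y hy => hm.not_lt hy⟩
      rw [mem_filter, mem_powerset] at hMmem
      obtain ⟨hMS, hMK⟩ := hMmem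
      have hproper : ∀ M' ⊂ M, M' ∈ K := by
        intro M' hM'
        by_contra hM'K
        exact hMmin M' (mem_filter.mpr ⟨mem_powerset.mpr (hM'.subset.trans hMS), hM'K⟩) hM'
      have hv0M : v0 ∈ M := by
        by_contra hv0M
        apply hMK
        apply hK.2 _ hG
        intro y hy
        rcases mem_insert.mp (hMS hy) with rfl | hy'
        · exact absurd hy hv0M
        · exact hy'
      have hv1M : v1 ∈ M := by
        by_contra hv1M
        apply hMK
        apply hK.2 T hTK
        intro y hy
        rcases mem_insert.mp (hMS hy) with rfl | hy'
        · exact hv0T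
        · have hyv1 : y ≠ v1 := fun h => hv1M (h ▸ hy)
          have : y ∈ F.erase v1 := mem_erase.mpr ⟨hyv1, (mem_erase.mp hy').2⟩
          rw [hFe] at this
          exact mem_of_mem_erase this
      have hmiss : IsMissingFace K M := by
        refine ⟨?_, hMK, hproper⟩
        intro y hy
        rcases mem_insert.mp (hMS hy) with rfl | hy'
        · exact h0
        · exact hK.2 _ hG {y} (singleton_subset_iff.mpr hy')
      have hcardF : F.card = T.card := by
        rw [hFT, card_insert_of_notMem, card_erase_of_mem hv0T]
        · have : 1 ≤ T.card := card_pos.mpr ⟨v0, hv0T⟩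
          omega
        · rw [mem_erase]; exact fun h => hv1T h.2
      have hcardM : M.card ≤ T.card := by
        calc M.card ≤ S.card := card_le_card hMS
          _ ≤ (F.erase x).card + 1 := card_insert_le _ _
          _ = F.card := by rw [card_erase_of_mem hx]; have : 1 ≤ F.card := card_pos.mpr ⟨x, hx⟩; omega
          _ = T.card := hcardF
      have hdim : (M.card : ℤ) - 1 ≤ dimC K := by
        have hTs : T.card ≤ K.sup Finset.card := le_sup hTK
        rw [dimC]
        have : M.card ≤ K.sup Finset.card := hcardM.trans hTs
        omega
      exact hadm M hmiss hdim ⟨hv0M, hv1M⟩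
  · intro h
    exact hK.2 _ h _ (subset_insert _ _)
end

section
/- Let K' be obtained from the simplicial complex K by an admissible contraction of v0 onto v1. Then the map φ : C_•(K'; Z/2) → C_•(K; Z/2) is an injective chain map: in every dimension it is injective, and it commutes with the boundary maps. -/
open Finset

variable {V : Type*} [DecidableEq V]

/-- The faces of `K` of dimension `n`, i.e. of cardinality `n + 1`. -/
def facesOfDim (K : Finset (Finset V)) (n : ℕ) : Finset (Finset V) :=
  K.filter (fun F => F.card = n + 1)

/-- `C_n(K; ℤ/2)`: the `ℤ/2`-vector space with basis the `n`-dimensional faces of `K`,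
realized as the space of `ℤ/2`-valued functions on the `n`-dimensional faces. -/
abbrev Chains (K : Finset (Finset V)) (n : ℕ) : Type _ :=
  {F : Finset V // F ∈ facesOfDim K n} → ZMod 2

/-- The boundary map `∂ : C_{n+1}(K;ℤ/2) → C_n(K;ℤ/2)`, determined on a basis face `F`
by `∂F = Σ_{x ∈ F} (F \ {x})`.  (The coefficient of `G` in `∂F` is `1` iff `G ⊆ F`,
as `G` and `F` are faces with `|F| = |G| + 1`.) -/
def bdry (K : Finset (Finset V)) (n : ℕ) (c : Chains K (n + 1)) : Chains K n :=
  fun G => ∑ F ∈ (facesOfDim K (n + 1)).attach, if G.1 ⊆ F.1 then c F else 0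

/-- `supp φ(F)` for the contraction of `v0` onto `v1` turning `K` into `K'`:
`{F}` if `F ∈ K`, and `{(F \ {x}) ∪ {v0} : x ∈ F, (F \ {x}) ∪ {v0} ∈ K}` otherwise. -/
def suppPhi (K : Finset (Finset V)) (v0 : V) (F : Finset V) : Finset (Finset V) :=
  if F ∈ K then {F}
  else (F.image fun x => insert v0 (F.erase x)).filter (fun A => A ∈ K)

/-- The chain map `φ : C_•(K';ℤ/2) → C_•(K;ℤ/2)` determined on a basis face `F` of `K'`
by `φ(F) = Σ_{A ∈ supp φ(F)} A`. -/
def phi (K K' : Finset (Finset V)) (v0 : V) (n : ℕ) (c : Chains K' n) : Chains K n :=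
  fun A => ∑ F ∈ (facesOfDim K' n).attach, if A.1 ∈ suppPhi K v0 F.1 then c F else 0

/-! Write `v0 * S` for the cone `insert v0 S`. Admissibility enters through one fact: if
`F ∈ K' \ K` and `v1 ∈ S ⊂ F`, then `v0 * S ∈ K ↔ S ∈ K`, since otherwise a minimal non-face
inside `v0 * v1 * (S \ v1)` would be a missing face of dimension `≤ dim K` containing `v0` and
`v1`. Hence for `y ∈ F` exactly one of `v0 * (F \ y) ∈ K` and `F \ y ∈ K' \ K` holds, so when
`v0 ∈ A` the coefficients at `A` of `∂φ(F)` and `φ(∂F)` add up to the number of `y ∈ F` with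
`A ⊆ v0 * (F \ y)`, which is `0` or `2` (when `v0 ∉ A` they agree outright). `φ` is injective
because `F`, resp. `v0 * (F \ v1)`, lies in the support of `φ(F)` and of no other `φ(G)`. -/

lemma ZMod.natCast_eq_natCast_of_even_add {a b : ℕ} (h : Even (a + b)) :
    (a : ZMod 2) = b := by
  have h' : ((a + b : ℕ) : ZMod 2) = 0 := (ZMod.natCast_eq_zero_iff_even).2 h
  push_cast at h'
  rw [eq_neg_of_add_eq_zero_left h', ZMod.neg_eq_self_mod_two]

lemma sum_attach_ite_sum_ite {α ι M : Type*} [AddCommMonoid M] (t : Finset α) (s : Finset ι)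
    (P : α → Prop) [DecidablePred P] (Q : α → ι → Prop) [∀ a, DecidablePred (Q a)] (f : ι → M) :
    ∑ y ∈ t.attach, (if P y then ∑ i ∈ s, if Q y i then f i else 0 else 0) =
      ∑ i ∈ s, #{y ∈ t | P y ∧ Q y i} • f i := by
  rw [sum_attach t fun y => if P y then ∑ i ∈ s, if Q y i then f i else 0 else 0]
  calc ∑ y ∈ t, (if P y then ∑ i ∈ s, if Q y i then f i else 0 else 0)
      = ∑ y ∈ t, ∑ i ∈ s, if P y ∧ Q y i then f i else 0 := by
        refine sum_congr rfl fun y _ => ?_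
        split_ifs with hP <;> simp [hP]
    _ = ∑ i ∈ s, #{y ∈ t | P y ∧ Q y i} • f i := by
        rw [sum_comm]
        simp_rw [← sum_filter, sum_const]

section Contraction

variable {K : Finset (Finset V)} {v0 v1 y : V} {A B D F G S T : Finset V} {n : ℕ}

omit [DecidableEq V] in
lemma IsComplex.mem_of_subset_s5 (hK : IsComplex K) (hS : S ∈ K) (hTS : T ⊆ S) : T ∈ K :=
  hK.2 S hS T hTS

omit [DecidableEq V] in
lemma mem_facesOfDim : F ∈ facesOfDim K n ↔ F ∈ K ∧ #F = n + 1 := mem_filter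

lemma card_filter_erase_eq (hAc : #A + 1 = #F) :
    #{y ∈ F | F.erase y = A} = if A ⊆ F then 1 else 0 := by
  split_ifs with hAF
  · obtain ⟨a, haA, rfl⟩ := exists_eq_insert_iff.2 ⟨hAF, hAc⟩
    rw [card_eq_one]
    refine ⟨a, eq_singleton_iff_unique_mem.2 ⟨by simp [erase_insert haA], fun y hy => ?_⟩⟩
    obtain ⟨-, hyA⟩ := mem_filter.1 hy
    by_contra hya
    have : a ∈ (insert a A).erase y := mem_erase.2 ⟨Ne.symm hya, mem_insert_self _ _⟩
    exact haA (hyA ▸ this)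
  · exact card_eq_zero.2 (filter_eq_empty_iff.2 fun y _ h => hAF (h ▸ erase_subset _ _))

lemma mem_contractC (hK : IsComplex K) (hne : v0 ≠ v1) :
    G ∈ contractC K v0 v1 ↔ v0 ∉ G ∧ (G ∈ K ∨ v1 ∈ G ∧ insert v0 (G.erase v1) ∈ K) := by
  simp only [contractC, mem_union, mem_filter, mem_image]
  constructor
  · rintro (⟨hG, hv0⟩ | ⟨T, ⟨hT, hv0T⟩, rfl⟩)
    · exact ⟨hv0, Or.inl hG⟩
    refine ⟨by simp [hne], ?_⟩
    by_cases hv1T : v1 ∈ T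
    · exact Or.inl (hK.mem_of_subset_s5 hT (insert_subset hv1T (erase_subset _ _)))
    · rw [erase_insert (by simp [hv1T]), insert_erase hv0T]
      exact Or.inr ⟨mem_insert_self _ _, hT⟩
  · rintro ⟨hv0, hG | ⟨hv1, hT⟩⟩
    · exact Or.inl ⟨hG, hv0⟩
    · refine Or.inr ⟨_, ⟨hT, mem_insert_self _ _⟩, ?_⟩
      rw [erase_insert (by simp [hv0]), insert_erase hv1]

lemma mem_contractC_of_mem (hG : G ∈ K) (hv0 : v0 ∉ G) : G ∈ contractC K v0 v1 :=
  mem_union_left _ (mem_filter.2 ⟨hG, hv0⟩)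

lemma suppPhi_of_mem (hF : F ∈ K) : suppPhi K v0 F = {F} := if_pos hF

lemma mem_suppPhi_iff_exists_of_notMem (hF : F ∉ K) :
    A ∈ suppPhi K v0 F ↔ (∃ x ∈ F, insert v0 (F.erase x) = A) ∧ A ∈ K := by
  simp [suppPhi, hF]

lemma mem_suppPhi_iff_of_notMem (hF : F ∉ K) (hv0F : v0 ∉ F) :
    A ∈ suppPhi K v0 F ↔ A ∈ K ∧ v0 ∈ A ∧ A ⊆ insert v0 F ∧ #A = #F := by
  rw [mem_suppPhi_iff_exists_of_notMem hF]
  constructor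
  · rintro ⟨⟨x, hx, rfl⟩, hA⟩
    have hv0x : v0 ∉ F.erase x := fun h => hv0F (mem_of_mem_erase h)
    refine ⟨hA, mem_insert_self _ _, insert_subset_insert _ (erase_subset _ _), ?_⟩
    rw [card_insert_of_notMem hv0x, card_erase_add_one hx]
  · rintro ⟨hA, hv0A, hAF, hAc⟩
    have hcard : #(A.erase v0) + 1 = #F := by rw [card_erase_add_one hv0A, hAc]
    obtain ⟨x, hx, hxF⟩ := exists_eq_insert_iff.2 ⟨subset_insert_iff.1 hAF, hcard⟩
    refine ⟨⟨x, hxF ▸ mem_insert_self _ _, ?_⟩, hA⟩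
    rw [← hxF, erase_insert hx, insert_erase hv0A]

omit [DecidableEq V] in
lemma exists_isMissingFace_subset_s5 (hD : D ∉ K)
    (hD1 : ∀ x ∈ D, {x} ∈ K) : ∃ M ⊆ D, IsMissingFace K M := by
  induction D using Finset.strongInduction with
  | H D ih =>
    by_cases hmin : ∀ S ⊂ D, S ∈ K
    · exact ⟨D, Subset.rfl, hD1, hD, hmin⟩
    push Not at hmin
    obtain ⟨S, hSD, hS⟩ := hmin
    obtain ⟨M, hMS, hM⟩ := ih S hSD hS fun x hx => hD1 x (hSD.subset hx)
    exact ⟨M, hMS.trans hSD.subset, hM⟩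

lemma Admissible.insert_insert_mem (hK : IsComplex K) (hadm : Admissible K v0 v1)
    (h0 : insert v0 B ∈ K) (h1 : insert v1 B ∈ K) (hcard : #B + 2 ≤ K.sup card) :
    insert v0 (insert v1 B) ∈ K := by
  by_contra hD
  have hD1 : ∀ x ∈ insert v0 (insert v1 B), {x} ∈ K := by
    intro x hx
    rcases mem_insert.1 hx with rfl | hx
    · exact hK.mem_of_subset_s5 h0 (singleton_subset_iff.2 (mem_insert_self _ _))
    · exact hK.mem_of_subset_s5 h1 (singleton_subset_iff.2 hx)
  obtain ⟨M, hMD, hM⟩ := exists_isMissingFace_subset_s5 hD hD1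
  have hv0 : v0 ∈ M := by
    by_contra h
    exact hM.2.1 (hK.mem_of_subset_s5 h1 ((subset_insert_iff_of_notMem h).1 hMD))
  have hv1 : v1 ∈ M := by
    by_contra h
    rw [insert_comm] at hMD
    exact hM.2.1 (hK.mem_of_subset_s5 h0 ((subset_insert_iff_of_notMem h).1 hMD))
  have hdim : (#M : ℤ) - 1 ≤ dimC K := by
    have := card_le_card hMD
    have := card_insert_le v0 (insert v1 B)
    have := card_insert_le v1 B
    unfold dimC
    omega
  exact hadm M hM hdim ⟨hv0, hv1⟩

lemma notMem_of_mem_contractC (hK : IsComplex K) (hne : v0 ≠ v1)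
    (hF : F ∈ contractC K v0 v1) : v0 ∉ F :=
  ((mem_contractC hK hne).1 hF).1

lemma insert_erase_mem_of_mem_contractC (hK : IsComplex K) (hne : v0 ≠ v1)
    (hF : F ∈ contractC K v0 v1) (hFK : F ∉ K) :
    v1 ∈ F ∧ insert v0 (F.erase v1) ∈ K :=
  ((mem_contractC hK hne).1 hF).2.resolve_left hFK

lemma Admissible.insert_mem_iff (hK : IsComplex K) (hne : v0 ≠ v1) (hadm : Admissible K v0 v1)
    (hF : F ∈ contractC K v0 v1) (hFK : F ∉ K) (hSF : S ⊂ F) (hv1 : v1 ∈ S) :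
    insert v0 S ∈ K ↔ S ∈ K := by
  obtain ⟨hv1F, hT⟩ := insert_erase_mem_of_mem_contractC hK hne hF hFK
  have hv0F := notMem_of_mem_contractC hK hne hF
  refine ⟨fun h => hK.mem_of_subset_s5 h (subset_insert _ _), fun hS => ?_⟩
  have hcard : #(S.erase v1) + 2 ≤ K.sup card := by
    have := card_lt_card hSF
    have := card_erase_add_one hv1
    have := le_sup (f := card) hT
    rw [card_insert_of_notMem fun h => hv0F (mem_of_mem_erase h), card_erase_add_one hv1F] at *
    omega
  have h0 : insert v0 (S.erase v1) ∈ K :=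
    hK.mem_of_subset_s5 hT (insert_subset_insert _ (erase_subset_erase _ hSF.subset))
  simpa [insert_erase hv1] using
    hadm.insert_insert_mem hK h0 (by rwa [insert_erase hv1]) hcard

lemma Admissible.erase_mem_contractC_and_notMem_iff (hK : IsComplex K) (hne : v0 ≠ v1)
    (hadm : Admissible K v0 v1) (hF : F ∈ contractC K v0 v1) (hFK : F ∉ K) (hy : y ∈ F) :
    F.erase y ∈ contractC K v0 v1 ∧ F.erase y ∉ K ↔ insert v0 (F.erase y) ∉ K := by
  obtain ⟨hv1F, hT⟩ := insert_erase_mem_of_mem_contractC hK hne hF hFK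
  have hv0F := notMem_of_mem_contractC hK hne hF
  by_cases hyv1 : y = v1
  · subst hyv1
    simp [mem_contractC hK hne, hT]
  have hv1 : v1 ∈ F.erase y := mem_erase.2 ⟨Ne.symm hyv1, hv1F⟩
  rw [hadm.insert_mem_iff hK hne hF hFK (erase_ssubset hy) hv1]
  refine ⟨And.right, fun h => ⟨(mem_contractC hK hne).2 ⟨?_, Or.inr ⟨hv1, ?_⟩⟩, h⟩⟩
  · exact fun h => hv0F (mem_of_mem_erase h)
  · refine hK.mem_of_subset_s5 hT (insert_subset_insert _ ?_)
    rw [erase_right_comm]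
    exact erase_subset _ _

lemma Admissible.erase_mem_contractC_and_mem_suppPhi_iff_of_notMem (hK : IsComplex K)
    (hne : v0 ≠ v1) (hadm : Admissible K v0 v1) (hF : F ∈ contractC K v0 v1) (hFK : F ∉ K)
    (hy : y ∈ F) (hA : A ∈ K) (hAc : #A + 1 = #F) (hv0A : v0 ∉ A) :
    F.erase y ∈ contractC K v0 v1 ∧ A ∈ suppPhi K v0 (F.erase y) ↔
      A ⊆ insert v0 (F.erase y) ∧ insert v0 (F.erase y) ∈ K := by
  constructor
  · rintro ⟨hG, hAG⟩
    by_cases hGK : F.erase y ∈ K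
    · rw [suppPhi_of_mem hGK, mem_singleton] at hAG
      subst hAG
      refine ⟨subset_insert _ _, ?_⟩
      by_contra h
      exact ((hadm.erase_mem_contractC_and_notMem_iff hK hne hF hFK hy).2 h).2 hGK
    · have hv0G : v0 ∉ F.erase y := notMem_of_mem_contractC hK hne hG
      exact absurd ((mem_suppPhi_iff_of_notMem hGK hv0G).1 hAG).2.1 hv0A
  · rintro ⟨hAG, -⟩
    have hAeq : A = F.erase y := eq_of_subset_of_card_le
      ((subset_insert_iff_of_notMem hv0A).1 hAG) (by rw [card_erase_of_mem hy]; omega)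
    subst hAeq
    exact ⟨mem_contractC_of_mem hA hv0A, by rw [suppPhi_of_mem hA]; exact mem_singleton_self _⟩

lemma Admissible.erase_mem_contractC_and_mem_suppPhi_iff_of_mem (hK : IsComplex K)
    (hne : v0 ≠ v1) (hadm : Admissible K v0 v1) (hF : F ∈ contractC K v0 v1) (hFK : F ∉ K)
    (hy : y ∈ F) (hA : A ∈ K) (hAc : #A + 1 = #F) (hv0A : v0 ∈ A) :
    F.erase y ∈ contractC K v0 v1 ∧ A ∈ suppPhi K v0 (F.erase y) ↔
      A ⊆ insert v0 (F.erase y) ∧ insert v0 (F.erase y) ∉ K := by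
  have hv0G : v0 ∉ F.erase y := fun h => notMem_of_mem_contractC hK hne hF (mem_of_mem_erase h)
  have hex := hadm.erase_mem_contractC_and_notMem_iff hK hne hF hFK hy
  constructor
  · rintro ⟨hG, hAG⟩
    by_cases hGK : F.erase y ∈ K
    · rw [suppPhi_of_mem hGK, mem_singleton] at hAG
      exact absurd (hAG ▸ hv0A) hv0G
    · exact ⟨((mem_suppPhi_iff_of_notMem hGK hv0G).1 hAG).2.2.1, hex.1 ⟨hG, hGK⟩⟩
  · rintro ⟨hAG, hT⟩
    obtain ⟨hG, hGK⟩ := hex.2 hT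
    refine ⟨hG, (mem_suppPhi_iff_of_notMem hGK hv0G).2 ⟨hA, hv0A, hAG, ?_⟩⟩
    rw [card_erase_of_mem hy]
    omega

lemma even_card_filter_subset_insert_erase (hv0A : v0 ∈ A) (hAc : #A + 1 = #F) :
    Even #{y ∈ F | A ⊆ insert v0 (F.erase y)} := by
  simp_rw [subset_insert_iff, subset_erase]
  by_cases hB : A.erase v0 ⊆ F
  · simp only [hB, true_and, filter_notMem_eq_sdiff]
    rw [card_sdiff_of_subset hB, card_erase_of_mem hv0A]
    have := card_pos.2 ⟨v0, hv0A⟩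
    exact ⟨1, by omega⟩
  · simp [hB]

lemma card_filter_facesOfDim_subset (L : Finset (Finset V)) (P : Finset V → Prop)
    [DecidablePred P] (hF : #F = n + 2) :
    #{G ∈ facesOfDim L n | P G ∧ G ⊆ F} = #{y ∈ F | F.erase y ∈ L ∧ P (F.erase y)} := by
  symm
  refine card_bij (fun y _ => F.erase y) (fun y hy => ?_) (fun y hy z hz h => ?_) fun G hG => ?_
  · obtain ⟨hyF, hyL, hyP⟩ := by simpa only [mem_filter] using hy
    refine mem_filter.2 ⟨mem_facesOfDim.2 ⟨hyL, ?_⟩, hyP, erase_subset _ _⟩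
    rw [card_erase_of_mem hyF]
    omega
  · exact erase_injOn F (mem_filter.1 hy).1 (mem_filter.1 hz).1 h
  · obtain ⟨hG, hGP, hGF⟩ := mem_filter.1 hG
    obtain ⟨hGL, hGc⟩ := mem_facesOfDim.1 hG
    obtain ⟨y, hyG, rfl⟩ := exists_eq_insert_iff.2 ⟨hGF, by omega⟩
    exact ⟨y, by simpa [erase_insert hyG] using ⟨hGL, hGP⟩, erase_insert hyG⟩

lemma card_filter_facesOfDim_mem_suppPhi (hFK : F ∉ K) (hv0F : v0 ∉ F) (hF : #F = n + 2)
    (P : Finset V → Prop) [DecidablePred P] :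
    #{F' ∈ facesOfDim K (n + 1) | P F' ∧ F' ∈ suppPhi K v0 F} =
      #{x ∈ F | P (insert v0 (F.erase x)) ∧ insert v0 (F.erase x) ∈ K} := by
  symm
  refine card_bij (fun x _ => insert v0 (F.erase x)) (fun x hx => ?_) (fun x hx z hz h => ?_)
    fun F' hF' => ?_
  · obtain ⟨hxF, hxP, hxK⟩ := by simpa only [mem_filter] using hx
    refine mem_filter.2 ⟨mem_facesOfDim.2 ⟨hxK, ?_⟩, hxP, ?_⟩
    · rw [card_insert_of_notMem fun h => hv0F (mem_of_mem_erase h), card_erase_of_mem hxF]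
      omega
    · exact (mem_suppPhi_iff_exists_of_notMem hFK).2 ⟨⟨x, hxF, rfl⟩, hxK⟩
  · have h' := congrArg (fun S => S.erase v0) h
    simp only [erase_insert fun h => hv0F (mem_of_mem_erase h)] at h'
    exact erase_injOn F (mem_filter.1 hx).1 (mem_filter.1 hz).1 h'
  · obtain ⟨-, hP, hsupp⟩ := mem_filter.1 hF'
    obtain ⟨⟨x, hxF, rfl⟩, hxK⟩ := (mem_suppPhi_iff_exists_of_notMem hFK).1 hsupp
    exact ⟨x, mem_filter.2 ⟨hxF, hP, hxK⟩, rfl⟩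

lemma card_filter_facesOfDim_mem_suppPhi_of_mem (hFK : F ∈ K) (hF : #F = n + 2) :
    #{F' ∈ facesOfDim K (n + 1) | A ⊆ F' ∧ F' ∈ suppPhi K v0 F} = if A ⊆ F then 1 else 0 := by
  rw [suppPhi_of_mem hFK]
  split_ifs with hAF
  · refine card_eq_one.2 ⟨F, eq_singleton_iff_unique_mem.2 ⟨?_, fun F' hF' => ?_⟩⟩
    · exact mem_filter.2 ⟨mem_facesOfDim.2 ⟨hFK, hF⟩, hAF, mem_singleton_self _⟩
    · exact mem_singleton.1 (mem_filter.1 hF').2.2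
  · refine card_eq_zero.2 (filter_eq_empty_iff.2 fun F' _ h => hAF ?_)
    rw [← mem_singleton.1 h.2]
    exact h.1

lemma Admissible.card_filter_suppPhi_eq (hK : IsComplex K) (hne : v0 ≠ v1)
    (hadm : Admissible K v0 v1) (hF : F ∈ facesOfDim (contractC K v0 v1) (n + 1))
    (hA : A ∈ facesOfDim K n) :
    (#{F' ∈ facesOfDim K (n + 1) | A ⊆ F' ∧ F' ∈ suppPhi K v0 F} : ZMod 2) =
      #{G ∈ facesOfDim (contractC K v0 v1) n | A ∈ suppPhi K v0 G ∧ G ⊆ F} := by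
  obtain ⟨hF', hFc⟩ := mem_facesOfDim.1 hF
  obtain ⟨hAK, hAc⟩ := mem_facesOfDim.1 hA
  have hv0F := notMem_of_mem_contractC hK hne hF'
  rw [card_filter_facesOfDim_subset _ _ hFc]
  by_cases hFK : F ∈ K
  · have hy : ∀ y ∈ F, F.erase y ∈ contractC K v0 v1 ∧ A ∈ suppPhi K v0 (F.erase y) ↔
        F.erase y = A := fun y _ => by
      have hGK : F.erase y ∈ K := hK.mem_of_subset_s5 hFK (erase_subset _ _)
      rw [suppPhi_of_mem hGK, mem_singleton, eq_comm, and_iff_right_iff_imp]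
      exact fun _ => mem_contractC_of_mem hGK fun h => hv0F (mem_of_mem_erase h)
    rw [card_filter_facesOfDim_mem_suppPhi_of_mem hFK hFc, filter_congr hy,
      card_filter_erase_eq (by omega)]
  rw [card_filter_facesOfDim_mem_suppPhi hFK hv0F hFc]
  by_cases hv0A : v0 ∈ A
  · rw [filter_congr fun y hy =>
      hadm.erase_mem_contractC_and_mem_suppPhi_iff_of_mem hK hne hF' hFK hy hAK (by omega) hv0A]
    apply ZMod.natCast_eq_natCast_of_even_add
    rw [← filter_filter, ← filter_filter, card_filter_add_card_filter_not]
    exact even_card_filter_subset_insert_erase hv0A (by omega)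
  · rw [filter_congr fun y hy =>
      hadm.erase_mem_contractC_and_mem_suppPhi_iff_of_notMem hK hne hF' hFK hy hAK (by omega) hv0A]

lemma phi_isLinearMap (K' : Finset (Finset V)) : IsLinearMap (ZMod 2) (phi K K' v0 n) := by
  refine ⟨fun c d => funext fun A => ?_, fun a c => funext fun A => ?_⟩
  · simp only [phi, Pi.add_apply, ← sum_add_distrib]
    exact sum_congr rfl fun F _ => by split_ifs <;> simp
  · simp only [phi, Pi.smul_apply, smul_eq_mul, mul_sum]
    exact sum_congr rfl fun F _ => by split_ifs <;> simp

lemma phi_apply_of_forall_mem_suppPhi_eq {K' : Finset (Finset V)} (hA : A ∈ facesOfDim K n)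
    (hF : F ∈ facesOfDim K' n) (hAF : A ∈ suppPhi K v0 F)
    (huniq : ∀ G ∈ K', A ∈ suppPhi K v0 G → G = F) (c : Chains K' n) :
    phi K K' v0 n c ⟨A, hA⟩ = c ⟨F, hF⟩ := by
  rw [phi, sum_eq_single ⟨F, hF⟩ (fun G _ hGF => if_neg fun h => hGF ?_) (by simp), if_pos hAF]
  exact Subtype.ext (huniq G (mem_facesOfDim.1 G.2).1 h)

lemma exists_mem_suppPhi_forall_eq (hK : IsComplex K) (hne : v0 ≠ v1)
    (hF : F ∈ contractC K v0 v1) :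
    ∃ A ∈ K, #A = #F ∧ A ∈ suppPhi K v0 F ∧
      ∀ G ∈ contractC K v0 v1, A ∈ suppPhi K v0 G → G = F := by
  have hv0F := notMem_of_mem_contractC hK hne hF
  by_cases hFK : F ∈ K
  · refine ⟨F, hFK, rfl, by simp [suppPhi_of_mem hFK], fun G hG hFG => ?_⟩
    by_cases hGK : G ∈ K
    · exact (mem_singleton.1 (suppPhi_of_mem hGK ▸ hFG)).symm
    · have hv0G := notMem_of_mem_contractC hK hne hG
      exact absurd ((mem_suppPhi_iff_of_notMem hGK hv0G).1 hFG).2.1 hv0F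
  obtain ⟨hv1F, hT⟩ := insert_erase_mem_of_mem_contractC hK hne hF hFK
  have hv0T : v0 ∉ F.erase v1 := fun h => hv0F (mem_of_mem_erase h)
  refine ⟨_, hT, by rw [card_insert_of_notMem hv0T, card_erase_add_one hv1F],
    (mem_suppPhi_iff_exists_of_notMem hFK).2 ⟨⟨v1, hv1F, rfl⟩, hT⟩, fun G hG hTG => ?_⟩
  have hv0G := notMem_of_mem_contractC hK hne hG
  by_cases hGK : G ∈ K
  · exact absurd (mem_singleton.1 (suppPhi_of_mem hGK ▸ hTG) ▸ mem_insert_self v0 _) hv0G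
  obtain ⟨hv1G, -⟩ := insert_erase_mem_of_mem_contractC hK hne hG hGK
  obtain ⟨⟨x, -, hx⟩, -⟩ := (mem_suppPhi_iff_exists_of_notMem hGK).1 hTG
  have hGF : G.erase x = F.erase v1 := by
    simpa [erase_insert hv0T, erase_insert fun h => hv0G (mem_of_mem_erase h)] using
      congrArg (·.erase v0) hx
  have hxv1 : x = v1 := by
    by_contra h
    exact notMem_erase v1 F (hGF ▸ mem_erase.2 ⟨Ne.symm h, hv1G⟩)
  rw [hxv1] at hGF
  rw [← insert_erase hv1G, hGF, insert_erase hv1F]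

lemma phi_injective (hK : IsComplex K) (hne : v0 ≠ v1) :
    Function.Injective (phi K (contractC K v0 v1) v0 n) := by
  intro c d h
  funext ⟨F, hF⟩
  obtain ⟨hF', hFc⟩ := mem_facesOfDim.1 hF
  obtain ⟨A, hAK, hAc, hAF, huniq⟩ := exists_mem_suppPhi_forall_eq hK hne hF'
  have hA : A ∈ facesOfDim K n := mem_facesOfDim.2 ⟨hAK, hAc.trans hFc⟩
  rw [← phi_apply_of_forall_mem_suppPhi_eq hA hF hAF huniq c,
    ← phi_apply_of_forall_mem_suppPhi_eq hA hF hAF huniq d, h]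

lemma Admissible.bdry_phi_eq_phi_bdry (hK : IsComplex K) (hne : v0 ≠ v1)
    (hadm : Admissible K v0 v1) (c : Chains (contractC K v0 v1) (n + 1)) :
    bdry K n (phi K (contractC K v0 v1) v0 (n + 1) c) =
      phi K (contractC K v0 v1) v0 n (bdry (contractC K v0 v1) n c) := by
  funext A
  simp only [bdry, phi]
  rw [sum_attach_ite_sum_ite (s := (facesOfDim (contractC K v0 v1) (n + 1)).attach) _
      (fun F' => A.1 ⊆ F') (fun F' F => F' ∈ suppPhi K v0 F.1),
    sum_attach_ite_sum_ite (s := (facesOfDim (contractC K v0 v1) (n + 1)).attach) _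
      (fun G => A.1 ∈ suppPhi K v0 G) (fun G F => G ⊆ F.1)]
  refine sum_congr rfl fun F _ => ?_
  rw [nsmul_eq_mul, nsmul_eq_mul, hadm.card_filter_suppPhi_eq hK hne F.2 A.2]

end Contraction

theorem phi_injective_chain_map_general
    (K : Finset (Finset V)) (hK : IsComplex K) (v0 v1 : V) (hne : v0 ≠ v1)
    (hadm : Admissible K v0 v1) :
    (∀ n : ℕ, Function.Injective (phi K (contractC K v0 v1) v0 n)) ∧
    (∀ n : ℕ, IsLinearMap (ZMod 2) (phi K (contractC K v0 v1) v0 n)) ∧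
    (∀ (n : ℕ) (c : Chains (contractC K v0 v1) (n + 1)),
      bdry K n (phi K (contractC K v0 v1) v0 (n + 1) c) =
        phi K (contractC K v0 v1) v0 n (bdry (contractC K v0 v1) n c)) :=
  ⟨fun _ => phi_injective hK hne, fun _ => phi_isLinearMap _,
    fun _ c => hadm.bdry_phi_eq_phi_bdry hK hne c⟩

/-- For an admissible contraction of `v0` onto `v1` turning `K` into `K'`,
the map `φ : C_•(K';ℤ/2) → C_•(K;ℤ/2)` is an injective chain map: in every dimension it is
(linear and) injective, and it commutes with the boundary maps. -/
theorem phi_injective_chain_map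
    (K : Finset (Finset V)) (hK : IsComplex K) (v0 v1 : V) (hne : v0 ≠ v1)
    (h0 : ({v0} : Finset V) ∈ K) (h1 : ({v1} : Finset V) ∈ K)
    (hadm : Admissible K v0 v1) :
    (∀ n : ℕ, Function.Injective (phi K (contractC K v0 v1) v0 n)) ∧
    (∀ n : ℕ, IsLinearMap (ZMod 2) (phi K (contractC K v0 v1) v0 n)) ∧
    (∀ (n : ℕ) (c : Chains (contractC K v0 v1) (n + 1)),
      bdry K n (phi K (contractC K v0 v1) v0 (n + 1) c) =
        phi K (contractC K v0 v1) v0 n (bdry (contractC K v0 v1) n c)) :=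
  phi_injective_chain_map_general K hK v0 v1 hne hadm
end

section
/- Let H and K be simplicial complexes with H < K (H is a minor of K). Then there exists an injective chain map C_•(H; Z/2) → C_•(K; Z/2). -/
open Finset

variable {V : Type*} [DecidableEq V]

/-- One step in forming a minor: either a deletion (passing to a subcomplex)
or an admissible contraction of a vertex `u` onto a vertex `v`. -/
def MinorStep (K K' : Finset (Finset V)) : Prop :=
  (K' ⊆ K ∧ IsComplex K') ∨ ∃ u v : V, u ≠ v ∧ ({u} : Finset V) ∈ K ∧ ({v} : Finset V) ∈ K ∧
    Admissible K u v ∧ K' = contractC K u v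

/-- `H` is a minor of `K` (`H < K`): `H` is obtained from `K` by a finite sequence of
admissible contractions and deletions. -/
def IsMinor (H K : Finset (Finset V)) : Prop :=
  Relation.ReflTransGen (fun A B => MinorStep A B) K H

/-!
Injective chain maps compose, so it suffices to treat a single deletion and a single admissible
contraction `K'` of `K` (of `u` onto `v`). A deletion gives the inclusion of chains. For the
contraction, a face `T` of `K'` that is a face of `K` is sent to itself, and a face `T ∉ K`, which
contains `v` but not `u`, is sent to the cone from `u` over the facets `T \ {x}` of `T` lying in
`K`; admissibility is exactly what makes these cones `u ∪ (T \ {x})` faces of `K`. Modulo 2 this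
commutes with the boundary, and it is injective because `T` is the only face of `K'` whose image
contains `u ∪ (T \ {v})`.
-/

theorem Matrix.mulVec_injective_of_forall_exists_row_eq_single {m n R : Type*} [Fintype n]
    [DecidableEq n] [NonAssocSemiring R] {M : Matrix m n R}
    (hM : ∀ j, ∃ i, M i = Pi.single j 1) : Function.Injective M.mulVec := by
  intro c d hcd
  funext j
  obtain ⟨i, hi⟩ := hM j
  simpa [Matrix.mulVec, hi, single_dotProduct] using congrFun hcd i

namespace Finset

variable {α R : Type*} [DecidableEq α] {s t : Finset α} {u : α}

theorem exists_erase_eq_of_subset_of_card_add_one (h : s ⊆ t) (hcard : s.card + 1 = t.card) :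
    ∃ a ∈ t, t.erase a = s :=
  covBy_iff_exists_erase.1 <|
    covBy_iff_card_sdiff_eq_one.2 ⟨h, by rw [card_sdiff_of_subset h]; omega⟩

theorem sum_subset_erase_boole [AddCommMonoidWithOne R] (h : s ⊆ t) :
    ∑ a ∈ t, (if s ⊆ t.erase a then (1 : R) else 0) = ((t.card - s.card : ℕ) : R) := by
  rw [sum_boole, ← card_sdiff_of_subset h]
  congr 2
  ext a
  simp [subset_erase, h]

theorem sum_eq_erase_boole [AddCommMonoidWithOne R] (hcard : s.card + 1 = t.card) :
    ∑ a ∈ t, (if s = t.erase a then (1 : R) else 0) = if s ⊆ t then 1 else 0 := by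
  split_ifs with h
  · have h_eq_iff : ∀ a ∈ t, s = t.erase a ↔ s ⊆ t.erase a := fun a ha =>
      ⟨Eq.subset, fun hs => eq_of_subset_of_card_le hs (by rw [card_erase_of_mem ha]; omega)⟩
    rw [sum_congr rfl fun a ha => by rw [if_congr (h_eq_iff a ha) rfl rfl],
      sum_subset_erase_boole h, show t.card - s.card = 1 by omega, Nat.cast_one]
  · exact sum_eq_zero fun a _ => if_neg fun (hs : s = t.erase a) => h (hs ▸ erase_subset a t)

theorem sum_subset_erase_eq_zero [Ring R] [CharP R 2] (hcard : s.card + 2 = t.card) :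
    ∑ a ∈ t, (if s ⊆ t.erase a then (1 : R) else 0) = 0 := by
  by_cases h : s ⊆ t
  · rw [sum_subset_erase_boole h, show t.card - s.card = 2 by omega, Nat.cast_two,
      CharTwo.two_eq_zero]
  · exact sum_eq_zero fun a _ => if_neg fun hs => h (hs.trans (erase_subset a t))

theorem subset_insert_boole [AddMonoidWithOne R] (hu : u ∉ t) (hcard : s.card = t.card) :
    (if s ⊆ insert u t then (1 : R) else 0) =
      (if s = t then 1 else 0) + if u ∈ s ∧ s.erase u ⊆ t then 1 else 0 := by
  by_cases hus : u ∈ s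
  · have hst : s ≠ t := fun h => hu (h ▸ hus)
    simp [hus, hst, subset_insert_iff]
  · have h_iff : s ⊆ insert u t ↔ s = t := by
      rw [subset_insert_iff_of_notMem hus]
      exact ⟨fun h => eq_of_subset_of_card_le h hcard.ge, Eq.subset⟩
    simp [hus, h_iff]

theorem sum_eq_insert_erase_boole [AddCommMonoidWithOne R] (hu : u ∉ t)
    (hcard : s.card = t.card) :
    ∑ a ∈ t, (if s = insert u (t.erase a) then (1 : R) else 0) =
      if u ∈ s ∧ s.erase u ⊆ t then 1 else 0 := by
  by_cases hus : u ∈ s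
  · have h_iff : ∀ a, s = insert u (t.erase a) ↔ s.erase u = t.erase a := fun a =>
      ⟨fun h => by rw [h, erase_insert fun h' => hu (mem_of_mem_erase h')],
        fun h => by rw [← h, insert_erase hus]⟩
    simp only [h_iff, hus, true_and]
    exact sum_eq_erase_boole (by rw [card_erase_of_mem hus]; have := card_pos.2 ⟨u, hus⟩; omega)
  · simp only [hus, false_and, if_false]
    exact sum_eq_zero fun a _ => if_neg fun (h : s = _) => hus (h ▸ mem_insert_self u _)

end Finset

theorem IsComplex.sum_facesOfDim_filter_subset {M : Type*} [AddCommMonoid M]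
    {K : Finset (Finset V)} (hK : IsComplex K) {n : ℕ} {T : Finset V}
    (hT : T ∈ facesOfDim K (n + 1)) (f : Finset V → M) :
    ∑ S ∈ (facesOfDim K n).filter (· ⊆ T), f S = ∑ x ∈ T, f (T.erase x) := by
  obtain ⟨hTK, hTcard⟩ := mem_filter.1 hT
  rw [← sum_image (erase_injOn T)]
  congr 1
  ext S
  simp only [facesOfDim, mem_filter, mem_image]
  constructor
  · rintro ⟨⟨-, hScard⟩, hST⟩
    exact exists_erase_eq_of_subset_of_card_add_one hST (by omega)
  · rintro ⟨x, hx, rfl⟩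
    exact ⟨⟨hK.2 T hTK _ (erase_subset x T), by rw [card_erase_of_mem hx]; omega⟩,
      erase_subset x T⟩

def HasInjChainMap (H K : Finset (Finset V)) : Prop :=
  ∃ φ : ∀ n : ℕ, Chains H n →ₗ[ZMod 2] Chains K n,
    (∀ n : ℕ, Function.Injective (φ n)) ∧
    ∀ (n : ℕ) (c : Chains H (n + 1)), bdry K n (φ (n + 1) c) = φ n (bdry H n c)

namespace HasInjChainMap

theorem refl (K : Finset (Finset V)) : HasInjChainMap K K :=
  ⟨fun _ => LinearMap.id, fun _ => Function.injective_id, fun _ _ => rfl⟩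

theorem trans {H K L : Finset (Finset V)} (hHK : HasInjChainMap H K)
    (hKL : HasInjChainMap K L) : HasInjChainMap H L := by
  obtain ⟨φ, hφ_inj, hφ_bdry⟩ := hHK
  obtain ⟨ψ, hψ_inj, hψ_bdry⟩ := hKL
  exact ⟨fun n => ψ n ∘ₗ φ n, fun n => (hψ_inj n).comp (hφ_inj n),
    fun n c => by simp only [LinearMap.comp_apply, hψ_bdry, hφ_bdry]⟩

end HasInjChainMap

def bdryMatrix (K : Finset (Finset V)) (n : ℕ) :
    Matrix {G // G ∈ facesOfDim K n} {F // F ∈ facesOfDim K (n + 1)} (ZMod 2) :=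
  fun G F => if G.1 ⊆ F.1 then 1 else 0

theorem bdry_eq_mulVec (K : Finset (Finset V)) (n : ℕ) (c : Chains K (n + 1)) :
    bdry K n c = (bdryMatrix K n).mulVec c := by
  funext G
  simp only [bdry, bdryMatrix, Matrix.mulVec, dotProduct, ite_mul, one_mul, zero_mul]
  rfl

/-- `hbdry` is `∂ ∘ M = M ∘ ∂` read off entrywise, the facets of `T` being the
`T.erase x`. -/
theorem hasInjChainMap_of_matrix {H K : Finset (Finset V)} (hH : IsComplex H)
    (M : Matrix (Finset V) (Finset V) (ZMod 2))
    (hbdry : ∀ n, ∀ G ∈ facesOfDim K n, ∀ T ∈ facesOfDim H (n + 1),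
      ∑ F ∈ (facesOfDim K (n + 1)).filter (G ⊆ ·), M F T = ∑ x ∈ T, M G (T.erase x))
    (hrow : ∀ n, ∀ T ∈ facesOfDim H n, ∃ F ∈ facesOfDim K n,
      ∀ T' ∈ facesOfDim H n, M F T' = if T' = T then 1 else 0) :
    HasInjChainMap H K := by
  let φ n : Matrix {F // F ∈ facesOfDim K n} {T // T ∈ facesOfDim H n} (ZMod 2) :=
    M.submatrix (↑) (↑)
  refine ⟨fun n => (φ n).mulVecLin, fun n => ?_, fun n c => ?_⟩
  · refine Matrix.mulVec_injective_of_forall_exists_row_eq_single fun ⟨T, hT⟩ => ?_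
    obtain ⟨F, hF, hrowF⟩ := hrow n T hT
    refine ⟨⟨F, hF⟩, funext fun ⟨T', hT'⟩ => ?_⟩
    simp [hrowF T' hT', Pi.single_apply]
  · simp only [Matrix.mulVecLin_apply, bdry_eq_mulVec, Matrix.mulVec_mulVec]
    congr 1
    refine Matrix.ext fun ⟨G, hG⟩ ⟨T, hT⟩ => ?_
    simp only [Matrix.mul_apply, bdryMatrix, φ, Matrix.submatrix_apply, boole_mul, mul_boole]
    calc ∑ F : {F // F ∈ facesOfDim K (n + 1)}, (if G ⊆ F then M F T else 0)
        = ∑ F ∈ (facesOfDim K (n + 1)).filter (G ⊆ ·), M F T := by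
          rw [sum_coe_sort (facesOfDim K (n + 1)) (fun F => if G ⊆ F then M F T else 0),
            sum_filter]
      _ = ∑ S ∈ (facesOfDim H n).filter (· ⊆ T), M G S := by
          rw [hbdry n G hG T hT, hH.sum_facesOfDim_filter_subset hT]
      _ = ∑ S : {S // S ∈ facesOfDim H n}, (if S.1 ⊆ T then M G S else 0) := by
          rw [sum_filter, sum_coe_sort (facesOfDim H n) (fun S => if S ⊆ T then M G S else 0)]

theorem sum_one_apply_facesOfDim_filter {K : Finset (Finset V)} {n : ℕ} {G T : Finset V}
    (hT : T ∈ facesOfDim K (n + 1)) (hG : G.card = n + 1) :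
    ∑ F ∈ (facesOfDim K (n + 1)).filter (G ⊆ ·),
        (1 : Matrix (Finset V) (Finset V) (ZMod 2)) F T =
      ∑ x ∈ T, (1 : Matrix (Finset V) (Finset V) (ZMod 2)) G (T.erase x) := by
  simp only [Matrix.one_apply]
  rw [sum_ite_eq', sum_eq_erase_boole (by rw [hG, (mem_filter.1 hT).2])]
  simp [hT]

theorem hasInjChainMap_of_subset {H K : Finset (Finset V)} (hHK : H ⊆ K) (hH : IsComplex H) :
    HasInjChainMap H K := by
  have hfaces n : facesOfDim H n ⊆ facesOfDim K n := filter_subset_filter _ hHK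
  refine hasInjChainMap_of_matrix hH 1
    (fun n G hG T hT => sum_one_apply_facesOfDim_filter (hfaces _ hT) (mem_filter.1 hG).2)
    fun n T hT => ⟨T, hfaces n hT, fun T' _ => ?_⟩
  simp [Matrix.one_apply, eq_comm]

section Contraction

variable {K : Finset (Finset V)} {u v : V} {T : Finset V}

theorem mem_contractC_s6 :
    T ∈ contractC K u v ↔
      (T ∈ K ∧ u ∉ T) ∨ ∃ R ∈ K, u ∈ R ∧ insert v (R.erase u) = T := by
  simp [contractC, and_assoc]

theorem notMem_of_mem_contractC_s6 (huv : u ≠ v) (hT : T ∈ contractC K u v) : u ∉ T := by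
  rcases mem_contractC_s6.1 hT with ⟨-, huT⟩ | ⟨R, -, -, rfl⟩
  · exact huT
  · simp [huv]

theorem card_le_sup_card_of_mem_contractC (hT : T ∈ contractC K u v) :
    T.card ≤ K.sup card := by
  rcases mem_contractC_s6.1 hT with ⟨hTK, -⟩ | ⟨R, hR, huR, rfl⟩
  · exact le_sup hTK
  · calc (insert v (R.erase u)).card ≤ (R.erase u).card + 1 := card_insert_le _ _
      _ = R.card := card_erase_add_one huR
      _ ≤ K.sup card := le_sup hR

theorem isComplex_contractC (hK : IsComplex K) (huv : u ≠ v) : IsComplex (contractC K u v) := by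
  refine ⟨mem_contractC_s6.2 (Or.inl ⟨hK.1, notMem_empty u⟩), fun S hS T hTS => ?_⟩
  have huT : u ∉ T := fun h => notMem_of_mem_contractC_s6 huv hS (hTS h)
  rcases mem_contractC_s6.1 hS with ⟨hSK, -⟩ | ⟨R, hR, huR, rfl⟩
  · exact mem_contractC_s6.2 (Or.inl ⟨hK.2 S hSK T hTS, huT⟩)
  have hTR : T.erase v ⊆ R := (subset_insert_iff.1 hTS).trans (erase_subset u R)
  by_cases hvT : v ∈ T
  · refine mem_contractC_s6.2 (Or.inr ⟨insert u (T.erase v), hK.2 R hR _ (insert_subset huR hTR),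
      mem_insert_self u _, ?_⟩)
    rw [erase_insert fun h => huT (mem_of_mem_erase h), insert_erase hvT]
  · exact mem_contractC_s6.2 (Or.inl ⟨hK.2 R hR T (by rwa [erase_eq_of_notMem hvT] at hTR), huT⟩)

theorem insert_erase_mem_of_mem_contractC_s6 (hK : IsComplex K) (hT : T ∈ contractC K u v)
    (hTK : T ∉ K) : v ∈ T ∧ insert u (T.erase v) ∈ K := by
  rcases mem_contractC_s6.1 hT with ⟨hTK', -⟩ | ⟨R, hR, huR, rfl⟩
  · exact absurd hTK' hTK
  refine ⟨mem_insert_self v _, hK.2 R hR _ (insert_subset huR ?_)⟩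
  exact (subset_insert_iff.1 subset_rfl).trans (erase_subset u R)

theorem exists_isMissingFace_subset_s6 {W : Finset V} (hW : W ∉ K)
    (hWv : ∀ x ∈ W, ({x} : Finset V) ∈ K) : ∃ M ⊆ W, IsMissingFace K M := by
  obtain ⟨M, hM⟩ := (W.powerset.filter (· ∉ K)).exists_minimal ⟨W, by simp [hW]⟩
  obtain ⟨hMW, hMK⟩ := by simpa using hM.prop
  exact ⟨M, hMW, fun x hx => hWv x (hMW hx), hMK, fun S hSM => by
    by_contra hSK
    exact hM.not_prop_of_lt hSM (by simp [hSM.subset.trans hMW, hSK])⟩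

/-- A missing face inside `u ∪ (T \ {x})` would contain both `u` and `v`. -/
theorem Admissible.insert_erase_mem (hK : IsComplex K) (hadm : Admissible K u v)
    (hT : T ∈ contractC K u v) (hTK : T ∉ K) {x : V} (hx : x ∈ T) (hxK : T.erase x ∈ K) :
    insert u (T.erase x) ∈ K := by
  obtain ⟨-, hSK⟩ := insert_erase_mem_of_mem_contractC_s6 hK hT hTK
  by_contra hW
  obtain ⟨M, hMW, hM⟩ := exists_isMissingFace_subset_s6 hW fun y hy => by
    rcases mem_insert.1 hy with rfl | hy
    · exact hK.2 _ hSK _ (singleton_subset_iff.2 (mem_insert_self y _))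
    · exact hK.2 _ hxK _ (singleton_subset_iff.2 hy)
  have huM : u ∈ M := by
    by_contra huM
    exact hM.2.1 (hK.2 _ hxK M ((subset_insert_iff_of_notMem huM).1 hMW))
  have hvM : v ∈ M := by
    by_contra hvM
    refine hM.2.1 (hK.2 _ hSK M (subset_insert_iff.2 (subset_erase.2 ⟨?_, ?_⟩)))
    · exact (subset_insert_iff.1 hMW).trans (erase_subset x T)
    · exact fun h => hvM (mem_of_mem_erase h)
  have hdim : (M.card : ℤ) - 1 ≤ dimC K := by
    have h1 := card_le_card hMW
    have h2 := card_insert_le u (T.erase x)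
    have h3 := card_erase_add_one hx
    have h4 := card_le_sup_card_of_mem_contractC hT
    unfold dimC
    omega
  exact hadm M hM hdim ⟨huM, hvM⟩

end Contraction

/-- A face `T ∉ K` of the contraction is sent to the cone from `u` over the part of `∂T`
lying in `K`, i.e. to the sum of the faces `u ∪ (T \ {x}) ∈ K`. -/
def contractMatrix (K : Finset (Finset V)) (u : V) : Matrix (Finset V) (Finset V) (ZMod 2) :=
  fun F T => if T ∈ K then (1 : Matrix (Finset V) (Finset V) (ZMod 2)) F T
    else if u ∈ F ∧ F.erase u ⊆ T then 1 else 0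

section ContractMatrix

variable {K : Finset (Finset V)} {u v : V} {n : ℕ} {T : Finset V}

theorem sum_contractMatrix_of_notMem (hK : IsComplex K) (huv : u ≠ v) (hadm : Admissible K u v)
    (hT : T ∈ facesOfDim (contractC K u v) (n + 1)) (hTK : T ∉ K) (G : Finset V) :
    ∑ F ∈ (facesOfDim K (n + 1)).filter (G ⊆ ·), contractMatrix K u F T =
      ∑ x ∈ T, if T.erase x ∈ K ∧ G ⊆ insert u (T.erase x) then 1 else 0 := by
  obtain ⟨hTK', hTcard⟩ := mem_filter.1 hT
  have huT := notMem_of_mem_contractC_s6 huv hTK'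
  have hcone_mem {x} (hx : x ∈ T) :
      insert u (T.erase x) ∈ (facesOfDim K (n + 1)).filter (G ⊆ ·) ↔
        T.erase x ∈ K ∧ G ⊆ insert u (T.erase x) := by
    have hcard : (insert u (T.erase x)).card = n + 1 + 1 := by
      rw [card_insert_of_notMem fun h => huT (mem_of_mem_erase h), card_erase_add_one hx, hTcard]
    simp only [facesOfDim, mem_filter, hcard, and_true]
    exact and_congr_left' ⟨fun h => hK.2 _ h _ (subset_insert u _),
      hadm.insert_erase_mem hK hTK' hTK hx⟩
  calc ∑ F ∈ (facesOfDim K (n + 1)).filter (G ⊆ ·), contractMatrix K u F T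
      = ∑ F ∈ (facesOfDim K (n + 1)).filter (G ⊆ ·), ∑ x ∈ T,
          if F = insert u (T.erase x) then (1 : ZMod 2) else 0 := by
        refine sum_congr rfl fun F hF => ?_
        rw [contractMatrix, if_neg hTK, sum_eq_insert_erase_boole huT]
        rw [(mem_filter.1 (mem_filter.1 hF).1).2, hTcard]
    _ = ∑ x ∈ T, if T.erase x ∈ K ∧ G ⊆ insert u (T.erase x) then 1 else 0 := by
        rw [sum_comm]
        exact sum_congr rfl fun x hx => by rw [sum_ite_eq', if_congr (hcone_mem hx) rfl rfl]

theorem contractMatrix_bdry_of_notMem (hK : IsComplex K) (huv : u ≠ v) (hadm : Admissible K u v)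
    {G : Finset V} (hG : G ∈ facesOfDim K n) (hT : T ∈ facesOfDim (contractC K u v) (n + 1))
    (hTK : T ∉ K) :
    ∑ F ∈ (facesOfDim K (n + 1)).filter (G ⊆ ·), contractMatrix K u F T =
      ∑ x ∈ T, contractMatrix K u G (T.erase x) := by
  obtain ⟨hTK', hTcard⟩ := mem_filter.1 hT
  have huT := notMem_of_mem_contractC_s6 huv hTK'
  set cone : Finset V → ZMod 2 := fun W => if u ∈ G ∧ G.erase u ⊆ W then 1 else 0
  have hcone : ∑ x ∈ T, cone (T.erase x) = 0 := by
    by_cases huG : u ∈ G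
    · simp only [cone, huG, true_and]
      refine sum_subset_erase_eq_zero ?_
      rw [card_erase_of_mem huG, (mem_filter.1 hG).2, hTcard]
      omega
    · simp [cone, huG]
  -- termwise the two sides differ by `cone (T.erase x)`, and `G.erase u` lies in exactly two
  -- facets of `T`
  calc ∑ F ∈ (facesOfDim K (n + 1)).filter (G ⊆ ·), contractMatrix K u F T
      = ∑ x ∈ T, if T.erase x ∈ K ∧ G ⊆ insert u (T.erase x) then 1 else 0 :=
        sum_contractMatrix_of_notMem hK huv hadm hT hTK G
    _ = ∑ x ∈ T, (contractMatrix K u G (T.erase x) + cone (T.erase x)) := by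
        refine sum_congr rfl fun x hx => ?_
        have hcard : G.card = (T.erase x).card := by
          rw [(mem_filter.1 hG).2, card_erase_of_mem hx, hTcard]
          rfl
        by_cases hxK : T.erase x ∈ K
        · simp only [hxK, true_and, contractMatrix, if_true, Matrix.one_apply, cone]
          exact subset_insert_boole (fun h => huT (mem_of_mem_erase h)) hcard
        · simp only [hxK, false_and, if_false, contractMatrix]
          exact (CharTwo.add_self_eq_zero _).symm
    _ = ∑ x ∈ T, contractMatrix K u G (T.erase x) := by
        rw [sum_add_distrib, hcone, add_zero]

theorem contractMatrix_bdry (hK : IsComplex K) (huv : u ≠ v) (hadm : Admissible K u v)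
    {G : Finset V} (hG : G ∈ facesOfDim K n) (hT : T ∈ facesOfDim (contractC K u v) (n + 1)) :
    ∑ F ∈ (facesOfDim K (n + 1)).filter (G ⊆ ·), contractMatrix K u F T =
      ∑ x ∈ T, contractMatrix K u G (T.erase x) := by
  by_cases hTK : T ∈ K
  · have hTK1 : T ∈ facesOfDim K (n + 1) := mem_filter.2 ⟨hTK, (mem_filter.1 hT).2⟩
    simp only [contractMatrix, hTK, if_true, fun x => hK.2 T hTK _ (erase_subset x T)]
    exact sum_one_apply_facesOfDim_filter hTK1 (mem_filter.1 hG).2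
  · exact contractMatrix_bdry_of_notMem hK huv hadm hG hT hTK

theorem exists_contractMatrix_row_eq_single (hK : IsComplex K) (huv : u ≠ v)
    (hT : T ∈ facesOfDim (contractC K u v) n) :
    ∃ F ∈ facesOfDim K n, ∀ T' ∈ facesOfDim (contractC K u v) n,
      contractMatrix K u F T' = if T' = T then 1 else 0 := by
  obtain ⟨hTK', hTcard⟩ := mem_filter.1 hT
  have huT := notMem_of_mem_contractC_s6 huv hTK'
  by_cases hTK : T ∈ K
  · refine ⟨T, mem_filter.2 ⟨hTK, hTcard⟩, fun T' hT' => ?_⟩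
    by_cases hT'K : T' ∈ K
    · simp [contractMatrix, hT'K, Matrix.one_apply, eq_comm]
    · have hT'T : T' ≠ T := fun h => hT'K (h ▸ hTK)
      simp [contractMatrix, hT'K, huT, hT'T]
  obtain ⟨hvT, hSK⟩ := insert_erase_mem_of_mem_contractC_s6 hK hTK' hTK
  have huTv : u ∉ T.erase v := fun h => huT (mem_of_mem_erase h)
  refine ⟨insert u (T.erase v), mem_filter.2 ⟨hSK, ?_⟩, fun T' hT' => ?_⟩
  · rw [card_insert_of_notMem huTv, card_erase_add_one hvT, hTcard]
  obtain ⟨hT'K', hT'card⟩ := mem_filter.1 hT'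
  have huT' := notMem_of_mem_contractC_s6 huv hT'K'
  by_cases hT'K : T' ∈ K
  · have hT'T : T' ≠ T := fun h => hTK (h ▸ hT'K)
    have hST' : insert u (T.erase v) ≠ T' := fun h => huT' (h ▸ mem_insert_self u _)
    simp [contractMatrix, hT'K, hST', hT'T]
  · obtain ⟨hvT', -⟩ := insert_erase_mem_of_mem_contractC_s6 hK hT'K' hT'K
    have h_iff : T.erase v ⊆ T' ↔ T' = T := by
      rw [erase_subset_iff_of_mem hvT']
      exact ⟨fun h => (eq_of_subset_of_card_le h (by rw [hT'card, hTcard])).symm,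
        fun h => h ▸ subset_rfl⟩
    simp [contractMatrix, hT'K, erase_insert huTv, h_iff]

theorem hasInjChainMap_contractC (hK : IsComplex K) (huv : u ≠ v) (hadm : Admissible K u v) :
    HasInjChainMap (contractC K u v) K :=
  hasInjChainMap_of_matrix (isComplex_contractC hK huv) (contractMatrix K u)
    (fun _ _ hG _ hT => contractMatrix_bdry hK huv hadm hG hT)
    fun _ _ hT => exists_contractMatrix_row_eq_single hK huv hT

end ContractMatrix

theorem MinorStep.isComplex {K K' : Finset (Finset V)} (hK : IsComplex K) (h : MinorStep K K') :
    IsComplex K' := by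
  rcases h with ⟨-, hK'⟩ | ⟨u, v, huv, -, -, -, rfl⟩
  · exact hK'
  · exact isComplex_contractC hK huv

theorem MinorStep.hasInjChainMap {K K' : Finset (Finset V)} (hK : IsComplex K)
    (h : MinorStep K K') : HasInjChainMap K' K := by
  rcases h with ⟨hK'K, hK'⟩ | ⟨u, v, huv, -, -, hadm, rfl⟩
  · exact hasInjChainMap_of_subset hK'K hK'
  · exact hasInjChainMap_contractC hK huv hadm

theorem IsMinor.hasInjChainMap {H K : Finset (Finset V)} (hK : IsComplex K) (h : IsMinor H K) :
    HasInjChainMap H K := by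
  induction h using Relation.ReflTransGen.head_induction_on with
  | refl => exact .refl H
  | head hstep _ ih => exact (ih (hstep.isComplex hK)).trans (hstep.hasInjChainMap hK)

theorem minor_gives_injective_chain_map_general
    (H K : Finset (Finset V)) (hK : IsComplex K)
    (h : IsMinor H K) :
    ∃ φ : ∀ n : ℕ, Chains H n →ₗ[ZMod 2] Chains K n,
      (∀ n : ℕ, Function.Injective (φ n)) ∧
      ∀ (n : ℕ) (c : Chains H (n + 1)), bdry K n (φ (n + 1) c) = φ n (bdry H n c) :=
  h.hasInjChainMap hK

/-- If `H < K` (i.e. `H` is a minor of `K`), then there exists an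
injective chain map `C_•(H;ℤ/2) → C_•(K;ℤ/2)`. -/
theorem minor_gives_injective_chain_map
    (H K : Finset (Finset V)) (hH : IsComplex H) (hK : IsComplex K)
    (h : IsMinor H K) :
    ∃ φ : ∀ n : ℕ, Chains H n →ₗ[ZMod 2] Chains K n,
      (∀ n : ℕ, Function.Injective (φ n)) ∧
      ∀ (n : ℕ) (c : Chains H (n + 1)), bdry K n (φ (n + 1) c) = φ n (bdry H n c) :=
  minor_gives_injective_chain_map_general H K hK h
end

section
/- Let {u,v} be an edge of a simplicial complex K satisfying the Link Condition, and let K' be the contraction of u onto v. Then the f-polynomials satisfy f(K,t) = f(K',t) + t(1+t)·f(lk({u,v},K), t). -/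
open Finset

variable {V : Type*} [DecidableEq V]

/-- The `f`-polynomial `f(K,t) = Σ_{F ∈ K} t^{|F|}` (sum over all faces, including `∅`). -/
noncomputable def fPoly (K : Finset (Finset V)) : Polynomial ℤ :=
  ∑ F ∈ K, Polynomial.X ^ F.card

/-! Split the faces of `K` by whether they contain `u`, and if so whether they contain `v`.
Faces containing both are `S ∪ {u,v}` with `S ∈ lk({u,v})`, contributing `t² f(lk)`.
`K'` is the union of `{T ∈ K : u ∉ T}` with the injective, card-preserving image
`T ↦ (T \ {u}) ∪ {v}` of `{T ∈ K : u ∈ T, v ∉ T}`. Such an image is already a face of `K`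
exactly when `T \ {u} ∈ lk(u) ∩ lk(v)`, so by the Link Condition the overlap of the two
families is `{S ∪ {v} : S ∈ lk({u,v})}`, which accounts for the remaining `t f(lk)`. -/

section FPoly

open Polynomial

theorem fPoly_union_add_fPoly_inter (s t : Finset (Finset V)) :
    fPoly (s ∪ t) + fPoly (s ∩ t) = fPoly s + fPoly t :=
  sum_union_inter

theorem fPoly_image_of_card_eq_add {s : Finset (Finset V)} {f : Finset V → Finset V} {k : ℕ}
    (hf : Set.InjOn f s) (hcard : ∀ T ∈ s, (f T).card = T.card + k) :
    fPoly (s.image f) = X ^ k * fPoly s := by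
  unfold fPoly
  rw [sum_image hf, mul_sum]
  exact sum_congr rfl fun T hT => by rw [hcard T hT, pow_add, mul_comm]

theorem fPoly_image_insert {s : Finset (Finset V)} {v : V} (hs : ∀ S ∈ s, v ∉ S) :
    fPoly (s.image (insert v)) = X * fPoly s := by
  rw [fPoly_image_of_card_eq_add (k := 1) ?_ fun S hS => card_insert_of_notMem (hs S hS), pow_one]
  intro S hS T hT hST
  rw [← erase_insert (hs S hS), ← erase_insert (hs T hT)]
  exact congrArg (erase · v) hST

theorem fPoly_image_insert_insert {s : Finset (Finset V)} {u v : V} (huv : u ≠ v)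
    (hs : ∀ S ∈ s, u ∉ S ∧ v ∉ S) :
    fPoly (s.image fun S => insert u (insert v S)) = X ^ 2 * fPoly s := by
  have hu : ∀ S ∈ s.image (insert v), u ∉ S := by
    rintro _ hS' h
    obtain ⟨S, hS, rfl⟩ := mem_image.mp hS'
    rcases mem_insert.mp h with rfl | h
    exacts [huv rfl, (hs S hS).1 h]
  have hcomp : s.image (fun S => insert u (insert v S)) = (s.image (insert v)).image (insert u) := by
    rw [image_image]; rfl
  rw [hcomp, fPoly_image_insert hu, fPoly_image_insert fun S hS => (hs S hS).2]
  ring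

theorem fPoly_image_insert_erase {s : Finset (Finset V)} {u v : V}
    (hs : ∀ T ∈ s, u ∈ T ∧ v ∉ T) :
    fPoly (s.image fun T => insert v (T.erase u)) = fPoly s := by
  have hv : ∀ T ∈ s, v ∉ T.erase u := fun T hT h => (hs T hT).2 (mem_of_mem_erase h)
  have hinv : ∀ T ∈ s, insert u ((insert v (T.erase u)).erase v) = T := fun T hT => by
    rw [erase_insert (hv T hT), insert_erase (hs T hT).1]
  refine (fPoly_image_of_card_eq_add (k := 0) ?_ fun T hT => ?_).trans (one_mul _)
  · intro S hS T hT hST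
    rw [← hinv S hS, ← hinv T hT]
    exact congrArg (fun F => insert u (F.erase v)) hST
  · rw [card_insert_of_notMem (hv T hT), card_erase_add_one (hs T hT).1]
    rfl

end FPoly

section Contraction

variable {K : Finset (Finset V)}

theorem mem_linkC_singleton_iff (hK : IsComplex K) {S : Finset V} {w : V} :
    S ∈ linkC K {w} ↔ w ∉ S ∧ insert w S ∈ K := by
  rw [linkC, mem_filter, union_comm, ← insert_eq, ← disjoint_iff_inter_eq_empty,
    disjoint_singleton_right]
  exact ⟨fun h => ⟨h.2.1, h.2.2⟩, fun h => ⟨hK.2 _ h.2 S (subset_insert w S), h⟩⟩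

theorem mem_linkC_pair_iff (hK : IsComplex K) {S : Finset V} {u v : V} :
    S ∈ linkC K {u, v} ↔ u ∉ S ∧ v ∉ S ∧ insert u (insert v S) ∈ K := by
  have hunion : S ∪ {u, v} = insert u (insert v S) := by
    ext x; simp only [mem_union, mem_insert, mem_singleton]; tauto
  rw [linkC, mem_filter, hunion, ← disjoint_iff_inter_eq_empty, disjoint_insert_right,
    disjoint_singleton_right]
  refine ⟨fun h => ⟨h.2.1.1, h.2.1.2, h.2.2⟩, fun h => ⟨?_, ⟨h.1, h.2.1⟩, h.2.2⟩⟩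
  exact hK.2 _ h.2.2 S ((subset_insert v S).trans (subset_insert u _))

theorem contractC_eq_union_image (hK : IsComplex K) {u v : V} (huv : u ≠ v) :
    contractC K u v = K.filter (fun T => u ∉ T) ∪
      (K.filter fun T => u ∈ T ∧ v ∉ T).image fun T => insert v (T.erase u) := by
  ext F
  simp only [contractC, mem_union, mem_filter, mem_image]
  constructor
  · rintro (hF | ⟨T, ⟨hTK, hTu⟩, rfl⟩)
    · exact Or.inl hF
    by_cases hTv : v ∈ T
    · rw [insert_eq_self.mpr (mem_erase.mpr ⟨huv.symm, hTv⟩)]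
      exact Or.inl ⟨hK.2 T hTK _ (erase_subset u T), notMem_erase u T⟩
    · exact Or.inr ⟨T, ⟨hTK, hTu, hTv⟩, rfl⟩
  · rintro (hF | ⟨T, ⟨hTK, hTu, -⟩, rfl⟩)
    exacts [Or.inl hF, Or.inr ⟨T, ⟨hTK, hTu⟩, rfl⟩]

theorem filter_mem_and_mem_eq_image_linkC (hK : IsComplex K) (u v : V) :
    K.filter (fun T => u ∈ T ∧ v ∈ T) =
      (linkC K {u, v}).image fun S => insert u (insert v S) := by
  ext T
  simp only [mem_filter, mem_image, mem_linkC_pair_iff hK]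
  constructor
  · rintro ⟨hTK, hTu, hTv⟩
    have hT : insert u (insert v ((T.erase u).erase v)) = T := by
      ext x; simp only [mem_insert, mem_erase]; grind
    refine ⟨(T.erase u).erase v, ⟨fun h => ?_, notMem_erase v _, hT.symm ▸ hTK⟩, hT⟩
    exact notMem_erase u T (mem_of_mem_erase h)
  · rintro ⟨S, ⟨-, -, hSK⟩, rfl⟩
    exact ⟨hSK, mem_insert_self u _, mem_insert_of_mem (mem_insert_self v S)⟩

theorem filter_notMem_inter_image_eq_image_linkC (hK : IsComplex K) {u v : V} (huv : u ≠ v)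
    (hLC : linkC K {u} ∩ linkC K {v} ⊆ linkC K {u, v}) :
    K.filter (fun T => u ∉ T) ∩
        (K.filter fun T => u ∈ T ∧ v ∉ T).image (fun T => insert v (T.erase u)) =
      (linkC K {u, v}).image (insert v) := by
  ext F
  simp only [mem_inter, mem_filter, mem_image]
  constructor
  · rintro ⟨⟨hFK, -⟩, T, ⟨hTK, hTu, hTv⟩, rfl⟩
    refine ⟨T.erase u, hLC ?_, rfl⟩
    rw [mem_inter, mem_linkC_singleton_iff hK, mem_linkC_singleton_iff hK, insert_erase hTu]
    exact ⟨⟨notMem_erase u T, hTK⟩, fun h => hTv (mem_of_mem_erase h), hFK⟩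
  · rintro ⟨S, hS, rfl⟩
    obtain ⟨hSu, hSv, hSK⟩ := (mem_linkC_pair_iff hK).mp hS
    refine ⟨⟨hK.2 _ hSK _ (subset_insert u _), ?_⟩, insert u S,
      ⟨hK.2 _ hSK _ (insert_subset_insert u (subset_insert v S)), mem_insert_self u S, ?_⟩, ?_⟩
    · simpa only [mem_insert, not_or] using ⟨huv, hSu⟩
    · simpa only [mem_insert, not_or] using ⟨huv.symm, hSv⟩
    · rw [erase_insert hSu]

end Contraction

theorem fPoly_contraction_general
    (K : Finset (Finset V)) (hK : IsComplex K) (u v : V) (huv : u ≠ v)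
    (hLC : linkC K {u} ∩ linkC K {v} = linkC K {u, v}) :
    fPoly K = fPoly (contractC K u v) +
      Polynomial.X * (1 + Polynomial.X) * fPoly (linkC K {u, v}) := by
  have hL : ∀ S ∈ linkC K {u, v}, u ∉ S ∧ v ∉ S := fun S hS =>
    ((mem_linkC_pair_iff hK).mp hS).imp_right And.left
  have hK_u : fPoly (K.filter (u ∈ ·)) + fPoly (K.filter (u ∉ ·)) = fPoly K :=
    sum_filter_add_sum_filter_not _ _ _
  have hK_uv : fPoly (K.filter fun T => u ∈ T ∧ v ∈ T) +
      fPoly (K.filter fun T => u ∈ T ∧ v ∉ T) = fPoly (K.filter (u ∈ ·)) := by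
    rw [← filter_filter, ← filter_filter]
    exact sum_filter_add_sum_filter_not _ _ _
  rw [filter_mem_and_mem_eq_image_linkC hK, fPoly_image_insert_insert huv hL] at hK_uv
  have hK' := fPoly_union_add_fPoly_inter (K.filter (u ∉ ·))
    ((K.filter fun T => u ∈ T ∧ v ∉ T).image fun T => insert v (T.erase u))
  rw [← contractC_eq_union_image hK huv, filter_notMem_inter_image_eq_image_linkC hK huv hLC.le,
    fPoly_image_insert fun S hS => (hL S hS).2,
    fPoly_image_insert_erase fun T hT => (mem_filter.mp hT).2] at hK'
  linear_combination -hK_u - hK_uv - hK'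

/-- If the edge `{u,v}` of `K` satisfies the Link Condition and `K'`
is the contraction of `u` onto `v`, then
`f(K,t) = f(K',t) + t(1+t)·f(lk({u,v},K), t)`. -/
theorem fPoly_contraction
    (K : Finset (Finset V)) (hK : IsComplex K) (u v : V) (huv : u ≠ v)
    (he : ({u, v} : Finset V) ∈ K)
    (hLC : linkC K {u} ∩ linkC K {v} = linkC K {u, v}) :
    fPoly K = fPoly (contractC K u v) +
      Polynomial.X * (1 + Polynomial.X) * fPoly (linkC K {u, v}) :=
  fPoly_contraction_general K hK u v huv hLC
end

section
/- Let {u,v} be an edge of a simplicial complex K satisfying the Link Condition, and let K' be the contraction of u onto v. Suppose dim(K) = dim(K') = d − 1 and dim(lk({u,v},K)) = d − 3. Then the h-polynomials satisfy h(K,t) = h(K',t) + t·h(lk({u,v},K), t). -/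
open Finset

variable {V : Type*} [DecidableEq V]

/-- `f_{i-1}(K)`: the number of faces of `K` of dimension `i - 1`, i.e. of cardinality `i`. -/
def fNum (K : Finset (Finset V)) (i : ℕ) : ℕ :=
  (K.filter fun F => F.card = i).card

/-- The `h`-polynomial of a complex of dimension `d - 1`:
`h(K,t) = Σ_{i=0}^{d} f_{i-1}(K) t^i (1-t)^{d-i}`. -/
noncomputable def hPoly (K : Finset (Finset V)) (d : ℕ) : Polynomial ℤ :=
  ∑ i ∈ Finset.range (d + 1),
    (fNum K i : Polynomial ℤ) * Polynomial.X ^ i * (1 - Polynomial.X) ^ (d - i)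

/-! ### Auxiliary definitions -/

/-- Faces containing `u` but not `v`, whose "pushed" version is still a face. -/
def bOne (K : Finset (Finset V)) (u v : V) : Finset (Finset V) :=
  K.filter (fun T => u ∈ T ∧ v ∉ T ∧ insert v T ∈ K)

/-- Faces containing both `u` and `v`. -/
def cBoth (K : Finset (Finset V)) (u v : V) : Finset (Finset V) :=
  K.filter (fun T => u ∈ T ∧ v ∈ T)

section Aux
variable (K : Finset (Finset V)) (u v : V)

lemma card_push {T : Finset V} (hu : u ∈ T) (hv : v ∉ T) :
    (insert v (T.erase u)).card = T.card := by
  have h1 : v ∉ T.erase u := fun h => hv (mem_of_mem_erase h)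
  rw [card_insert_of_notMem h1, card_erase_of_mem hu]
  have := card_pos.2 ⟨u, hu⟩
  omega

lemma push_injOn {T T' : Finset V} (hu : u ∈ T) (hv : v ∉ T) (hu' : u ∈ T') (hv' : v ∉ T')
    (h : insert v (T.erase u) = insert v (T'.erase u)) : T = T' := by
  have key : ∀ S : Finset V, u ∈ S → v ∉ S →
      insert u ((insert v (S.erase u)).erase v) = S := by
    intro S hS hvS
    rw [erase_insert (fun h => hvS (mem_of_mem_erase h)), insert_erase hS]
  rw [← key T hu hv, ← key T' hu' hv', h]

lemma contract_eq (hK : IsComplex K) (huv : u ≠ v) :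
    contractC K u v = K.filter (fun T => u ∉ T) ∪
      (K.filter (fun T => u ∈ T ∧ v ∉ T)).image (fun T => insert v (T.erase u)) := by
  unfold contractC
  apply Finset.Subset.antisymm
  · intro T' hT'
    rcases mem_union.1 hT' with h | h
    · exact mem_union_left _ h
    · obtain ⟨T, hT, rfl⟩ := mem_image.1 h
      rw [mem_filter] at hT
      by_cases hv : v ∈ T
      · apply mem_union_left
        rw [mem_filter]
        have hveq : insert v (T.erase u) = T.erase u :=
          insert_eq_self.2 (mem_erase.2 ⟨fun h => huv h.symm, hv⟩)
        rw [hveq]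
        exact ⟨hK.2 T hT.1 _ (erase_subset _ _), notMem_erase _ _⟩
      · exact mem_union_right _ (mem_image_of_mem _ (mem_filter.2 ⟨hT.1, hT.2, hv⟩))
  · intro T' hT'
    rcases mem_union.1 hT' with h | h
    · exact mem_union_left _ h
    · obtain ⟨T, hT, rfl⟩ := mem_image.1 h
      rw [mem_filter] at hT
      exact mem_union_right _ (mem_image_of_mem _ (mem_filter.2 ⟨hT.1, hT.2.1⟩))

lemma inter_eq (hK : IsComplex K) (huv : u ≠ v)
    (hLC : linkC K {u} ∩ linkC K {v} = linkC K {u, v}) :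
    K.filter (fun T => u ∉ T) ∩
      ((K.filter (fun T => u ∈ T ∧ v ∉ T)).image (fun T => insert v (T.erase u)))
    = (bOne K u v).image (fun T => insert v (T.erase u)) := by
  ext x
  simp only [mem_inter, mem_image, mem_filter, bOne]
  constructor
  · rintro ⟨⟨hxK, -⟩, T, ⟨hTK, huT, hvT⟩, rfl⟩
    refine ⟨T, ⟨hTK, huT, hvT, ?_⟩, rfl⟩
    -- use the Link Condition on S = T.erase u
    have hS : T.erase u ∈ linkC K {u} ∩ linkC K {v} := by
      rw [mem_inter]
      constructor
      · rw [linkC, mem_filter]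
        refine ⟨hK.2 T hTK _ (erase_subset _ _), ?_, ?_⟩
        · rw [Finset.eq_empty_iff_forall_notMem]
          intro a ha
          rw [mem_inter, mem_singleton] at ha
          exact (notMem_erase u T) (ha.2 ▸ ha.1)
        · have : T.erase u ∪ {u} = T := by
            ext a
            simp only [mem_union, mem_erase, mem_singleton]
            constructor
            · rintro (h | rfl) <;> [exact h.2; exact huT]
            · intro h
              by_cases hau : a = u
              · exact Or.inr hau
              · exact Or.inl ⟨hau, h⟩
          rw [this]; exact hTK
      · rw [linkC, mem_filter]
        refine ⟨hK.2 T hTK _ (erase_subset _ _), ?_, ?_⟩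
        · rw [Finset.eq_empty_iff_forall_notMem]
          intro a ha
          rw [mem_inter, mem_singleton] at ha
          exact hvT (ha.2 ▸ mem_of_mem_erase ha.1)
        · have : T.erase u ∪ {v} = insert v (T.erase u) := by
            ext a; simp [or_comm]
          rw [this]; exact hxK
    rw [hLC, linkC, mem_filter] at hS
    have hmem : T.erase u ∪ {u, v} ∈ K := hS.2.2
    have : T.erase u ∪ {u, v} = insert v T := by
      ext a
      simp only [mem_union, mem_erase, mem_insert, mem_singleton]
      constructor
      · rintro (⟨-, h⟩ | rfl | rfl)
        · exact Or.inr h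
        · exact Or.inr huT
        · exact Or.inl rfl
      · rintro (rfl | h)
        · exact Or.inr (Or.inr rfl)
        · by_cases hau : a = u
          · exact Or.inr (Or.inl hau)
          · exact Or.inl ⟨hau, h⟩
    rwa [this] at hmem
  · rintro ⟨T, ⟨hTK, huT, hvT, hins⟩, rfl⟩
    refine ⟨⟨?_, ?_⟩, T, ⟨hTK, huT, hvT⟩, rfl⟩
    · apply hK.2 _ hins
      intro a ha
      rw [mem_insert] at ha ⊢
      rcases ha with rfl | ha
      · exact Or.inl rfl
      · exact Or.inr (mem_of_mem_erase ha)
    · simp only [mem_insert, not_or]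
      exact ⟨huv, notMem_erase _ _⟩

/-- The key face-count identity. -/
lemma fNum_key (hK : IsComplex K) (huv : u ≠ v)
    (hLC : linkC K {u} ∩ linkC K {v} = linkC K {u, v}) (i : ℕ) :
    fNum K i = fNum (contractC K u v) i + fNum (bOne K u v) i + fNum (cBoth K u v) i := by
  classical
  set A := K.filter (fun T => u ∉ T) with hA
  set B := K.filter (fun T => u ∈ T ∧ v ∉ T) with hB
  set φ : Finset V → Finset V := fun T => insert v (T.erase u) with hφ
  set p : Finset V → Prop := fun F => F.card = i with hp
  -- cards of images
  have himgB : ((B.image φ).filter (fun F => F.card = i)).card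
      = (B.filter (fun F => F.card = i)).card := by
    rw [Finset.filter_image]
    rw [Finset.card_image_of_injOn]
    · congr 1
      apply filter_congr
      intro T hT
      rw [hB, mem_filter] at hT
      simp only [hφ, card_push u v hT.2.1 hT.2.2]
    · intro T hT T' hT' h
      simp only [coe_filter, Set.mem_setOf_eq, hB, mem_filter] at hT hT'
      exact push_injOn u v hT.1.2.1 hT.1.2.2 hT'.1.2.1 hT'.1.2.2 h
  have himgB1 : (((bOne K u v).image φ).filter (fun F => F.card = i)).card
      = ((bOne K u v).filter (fun F => F.card = i)).card := by
    rw [Finset.filter_image]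
    rw [Finset.card_image_of_injOn]
    · congr 1
      apply filter_congr
      intro T hT
      rw [bOne, mem_filter] at hT
      simp only [hφ, card_push u v hT.2.1 hT.2.2.1]
    · intro T hT T' hT' h
      simp only [coe_filter, Set.mem_setOf_eq, bOne, mem_filter] at hT hT'
      exact push_injOn u v hT.1.2.1 hT.1.2.2.1 hT'.1.2.1 hT'.1.2.2.1 h
  -- count for K'
  have e1 : fNum (contractC K u v) i
      = ((A.filter (fun F => F.card = i)) ∪ ((B.image φ).filter (fun F => F.card = i))).card := by
    rw [fNum, contract_eq K u v hK huv, filter_union, ← hA, ← hB, ← hφ]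
  have e2 := Finset.card_union_add_card_inter (A.filter (fun F => F.card = i))
      ((B.image φ).filter (fun F => F.card = i))
  have e3 : (A.filter (fun F => F.card = i)) ∩ ((B.image φ).filter (fun F => F.card = i))
      = ((bOne K u v).image φ).filter (fun F => F.card = i) := by
    rw [← filter_inter_distrib]
    congr 1
    rw [hA, hB, hφ]
    exact inter_eq K u v hK huv hLC
  rw [e3] at e2
  have hK' : fNum (contractC K u v) i + ((bOne K u v).filter (fun F => F.card = i)).card
      = (A.filter (fun F => F.card = i)).card + (B.filter (fun F => F.card = i)).card := by
    omega
  -- count for K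
  have hsplit : fNum K i = (A.filter (fun F => F.card = i)).card
      + (B.filter (fun F => F.card = i)).card + ((cBoth K u v).filter (fun F => F.card = i)).card := by
    have hABC : A ∪ (B ∪ cBoth K u v) = K := by
      ext T
      simp only [hA, hB, cBoth, mem_union, mem_filter]
      tauto
    have d1 : Disjoint (A.filter (fun F => F.card = i))
        ((B.filter (fun F => F.card = i)) ∪ ((cBoth K u v).filter (fun F => F.card = i))) := by
      rw [disjoint_left]
      intro T hT hT'
      simp only [hA, hB, cBoth, mem_filter, mem_union] at hT hT'
      tauto
    have d2 : Disjoint (B.filter (fun F => F.card = i)) ((cBoth K u v).filter (fun F => F.card = i)) := by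
      rw [disjoint_left]
      intro T hT hT'
      simp only [hB, cBoth, mem_filter] at hT hT'
      tauto
    conv_lhs => rw [fNum, ← hABC]
    rw [filter_union, filter_union,
      card_union_of_disjoint d1, card_union_of_disjoint d2, add_assoc]
  have hb1 : fNum (bOne K u v) i = ((bOne K u v).filter (fun F => F.card = i)).card := rfl
  have hc : fNum (cBoth K u v) i = ((cBoth K u v).filter (fun F => F.card = i)).card := rfl
  omega

lemma bOne_card (hK : IsComplex K) (huv : u ≠ v) (i : ℕ) :
    fNum (bOne K u v) (i + 1) = fNum (linkC K {u, v}) i := by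
  classical
  apply Finset.card_nbij' (fun T => T.erase u) (fun S => insert u S)
  · intro T hT
    simp only [bOne, linkC, fNum, mem_coe, mem_filter] at hT ⊢
    obtain ⟨⟨hTK, huT, hvT, hins⟩, hcard⟩ := hT
    refine ⟨⟨hK.2 T hTK _ (erase_subset _ _), ?_, ?_⟩, ?_⟩
    · rw [Finset.eq_empty_iff_forall_notMem]
      intro a ha
      simp only [mem_inter, mem_erase, mem_insert, mem_singleton] at ha
      rcases ha.2 with rfl | rfl
      · exact ha.1.1 rfl
      · exact hvT ha.1.2
    · have : T.erase u ∪ {u, v} = insert v T := by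
        ext a
        simp only [mem_union, mem_erase, mem_insert, mem_singleton]
        constructor
        · rintro (⟨-, h⟩ | rfl | rfl)
          · exact Or.inr h
          · exact Or.inr huT
          · exact Or.inl rfl
        · rintro (rfl | h)
          · exact Or.inr (Or.inr rfl)
          · by_cases hau : a = u
            · exact Or.inr (Or.inl hau)
            · exact Or.inl ⟨hau, h⟩
      rw [this]; exact hins
    · rw [card_erase_of_mem huT]; omega
  · intro S hS
    simp only [bOne, linkC, fNum, mem_coe, mem_filter] at hS ⊢
    obtain ⟨⟨hSK, hSint, hSun⟩, hcard⟩ := hS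
    have huS : u ∉ S := by
      intro h
      have : u ∈ S ∩ ({u, v} : Finset V) := by simp [h]
      rw [hSint] at this; exact notMem_empty _ this
    have hvS : v ∉ S := by
      intro h
      have : v ∈ S ∩ ({u, v} : Finset V) := by simp [h]
      rw [hSint] at this; exact notMem_empty _ this
    have hins : insert v (insert u S) = S ∪ {u, v} := by
      ext a; simp only [mem_insert, mem_union, mem_singleton]; tauto
    refine ⟨⟨?_, mem_insert_self _ _, ?_, ?_⟩, ?_⟩
    · apply hK.2 _ hSun
      intro a ha
      rw [mem_insert] at ha
      rcases ha with rfl | ha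
      · simp
      · exact mem_union_left _ ha
    · simp only [mem_insert, not_or]
      exact ⟨fun h => huv h.symm, hvS⟩
    · rw [hins]; exact hSun
    · rw [card_insert_of_notMem huS]; omega
  · intro T hT
    simp only [bOne, fNum, mem_coe, mem_filter] at hT
    exact insert_erase hT.1.2.1
  · intro S hS
    simp only [linkC, fNum, mem_coe, mem_filter] at hS
    have huS : u ∉ S := by
      intro h
      have : u ∈ S ∩ ({u, v} : Finset V) := by simp [h]
      rw [hS.1.2.1] at this; exact notMem_empty _ this
    beta_reduce
    rw [erase_insert huS]

lemma cBoth_card (hK : IsComplex K) (huv : u ≠ v) (i : ℕ) :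
    fNum (cBoth K u v) (i + 2) = fNum (linkC K {u, v}) i := by
  classical
  apply Finset.card_nbij' (fun T => (T.erase u).erase v) (fun S => insert u (insert v S))
  · intro T hT
    simp only [cBoth, linkC, fNum, mem_coe, mem_filter] at hT ⊢
    obtain ⟨⟨hTK, huT, hvT⟩, hcard⟩ := hT
    have hsub : (T.erase u).erase v ⊆ T := (erase_subset _ _).trans (erase_subset _ _)
    refine ⟨⟨hK.2 T hTK _ hsub, ?_, ?_⟩, ?_⟩
    · rw [Finset.eq_empty_iff_forall_notMem]
      intro a ha
      simp only [mem_inter, mem_erase, mem_insert, mem_singleton] at ha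
      rcases ha.2 with rfl | rfl
      · exact ha.1.2.1 rfl
      · exact ha.1.1 rfl
    · have : (T.erase u).erase v ∪ {u, v} = T := by
        ext a
        simp only [mem_union, mem_erase, mem_insert, mem_singleton]
        constructor
        · rintro (⟨-, -, h⟩ | rfl | rfl) <;> [exact h; exact huT; exact hvT]
        · intro h
          by_cases hau : a = u
          · exact Or.inr (Or.inl hau)
          · by_cases hav : a = v
            · exact Or.inr (Or.inr hav)
            · exact Or.inl ⟨hav, hau, h⟩
      rw [this]; exact hTK
    · rw [card_erase_of_mem, card_erase_of_mem huT]
      · omega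
      · exact mem_erase.2 ⟨fun h => huv h.symm, hvT⟩
  · intro S hS
    simp only [cBoth, linkC, fNum, mem_coe, mem_filter] at hS ⊢
    obtain ⟨⟨hSK, hSint, hSun⟩, hcard⟩ := hS
    have huS : u ∉ S := by
      intro h
      have : u ∈ S ∩ ({u, v} : Finset V) := by simp [h]
      rw [hSint] at this; exact notMem_empty _ this
    have hvS : v ∉ S := by
      intro h
      have : v ∈ S ∩ ({u, v} : Finset V) := by simp [h]
      rw [hSint] at this; exact notMem_empty _ this
    have heq : insert u (insert v S) = S ∪ {u, v} := by
      ext a; simp only [mem_insert, mem_union, mem_singleton]; tauto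
    refine ⟨⟨?_, mem_insert_self _ _, ?_⟩, ?_⟩
    · rw [heq]; exact hSun
    · exact mem_insert_of_mem (mem_insert_self _ _)
    · rw [card_insert_of_notMem, card_insert_of_notMem hvS]
      · omega
      · simp only [mem_insert, not_or]
        exact ⟨huv, huS⟩
  · intro T hT
    simp only [cBoth, fNum, mem_coe, mem_filter] at hT
    beta_reduce
    rw [insert_erase (mem_erase.2 ⟨(fun h => huv h.symm : v ≠ u), hT.1.2.2⟩),
      insert_erase hT.1.2.1]
  · intro S hS
    simp only [linkC, fNum, mem_coe, mem_filter] at hS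
    have huS : u ∉ S := by
      intro h
      have : u ∈ S ∩ ({u, v} : Finset V) := by simp [h]
      rw [hS.1.2.1] at this; exact notMem_empty _ this
    have hvS : v ∉ S := by
      intro h
      have : v ∈ S ∩ ({u, v} : Finset V) := by simp [h]
      rw [hS.1.2.1] at this; exact notMem_empty _ this
    beta_reduce
    rw [erase_insert]
    · rw [erase_insert hvS]
    · simp only [mem_insert, not_or]
      exact ⟨huv, huS⟩

lemma bOne_zero : fNum (bOne K u v) 0 = 0 := by
  rw [fNum, Finset.card_eq_zero, Finset.filter_eq_empty_iff]
  intro T hT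
  simp only [bOne, mem_filter] at hT
  intro h
  rw [Finset.card_eq_zero] at h
  subst h
  exact notMem_empty u hT.2.1

lemma cBoth_zero : fNum (cBoth K u v) 0 = 0 := by
  rw [fNum, Finset.card_eq_zero, Finset.filter_eq_empty_iff]
  intro T hT
  simp only [cBoth, mem_filter] at hT
  intro h
  rw [Finset.card_eq_zero] at h
  subst h
  exact notMem_empty u hT.2.1

lemma cBoth_one (huv : u ≠ v) : fNum (cBoth K u v) 1 = 0 := by
  rw [fNum, Finset.card_eq_zero, Finset.filter_eq_empty_iff]
  intro T hT
  simp only [cBoth, mem_filter] at hT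
  intro h
  rw [Finset.card_eq_one] at h
  obtain ⟨a, rfl⟩ := h
  have h1 := mem_singleton.1 hT.2.1
  have h2 := mem_singleton.1 hT.2.2
  exact huv (h1.trans h2.symm)

end Aux

/-- If the edge `{u,v}` of `K` satisfies the Link Condition, `K'` is
the contraction of `u` onto `v`, `dim K = dim K' = d - 1` and `dim lk({u,v},K) = d - 3`,
then `h(K,t) = h(K',t) + t·h(lk({u,v},K), t)`. -/
theorem hPoly_contraction
    (K : Finset (Finset V)) (hK : IsComplex K) (u v : V) (huv : u ≠ v)
    (he : ({u, v} : Finset V) ∈ K)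
    (hLC : linkC K {u} ∩ linkC K {v} = linkC K {u, v})
    (d : ℕ) (hdK : dimC K = (d : ℤ) - 1)
    (hdK' : dimC (contractC K u v) = (d : ℤ) - 1)
    (hdL : dimC (linkC K {u, v}) = (d : ℤ) - 3) :
    hPoly K d = hPoly (contractC K u v) d +
      Polynomial.X * hPoly (linkC K {u, v}) (d - 2) := by
  classical
  set L := linkC K {u, v} with hL
  -- from hdL : sup of card over L equals d - 2 and d ≥ 2
  have hsup : ((L.sup Finset.card : ℕ) : ℤ) = (d : ℤ) - 2 := by
    rw [dimC] at hdL; linarith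
  have hd2 : 2 ≤ d := by
    have : (0 : ℤ) ≤ ((L.sup Finset.card : ℕ) : ℤ) := Int.natCast_nonneg _
    omega
  have hsupN : L.sup Finset.card = d - 2 := by omega
  have hLvanish : ∀ j, d - 2 < j → fNum L j = 0 := by
    intro j hj
    rw [fNum, Finset.card_eq_zero, Finset.filter_eq_empty_iff]
    intro S hS hcard
    have : S.card ≤ L.sup Finset.card := Finset.le_sup hS
    omega
  -- abbreviations for polynomial terms
  set X : Polynomial ℤ := Polynomial.X with hX
  -- rewrite hPoly K d using fNum_key
  have key : hPoly K d = hPoly (contractC K u v) d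
      + (∑ i ∈ Finset.range (d + 1), (fNum (bOne K u v) i : Polynomial ℤ) * X ^ i * (1 - X) ^ (d - i))
      + (∑ i ∈ Finset.range (d + 1), (fNum (cBoth K u v) i : Polynomial ℤ) * X ^ i * (1 - X) ^ (d - i)) := by
    rw [hPoly, hPoly, ← Finset.sum_add_distrib, ← Finset.sum_add_distrib]
    apply Finset.sum_congr rfl
    intro i _
    rw [fNum_key K u v hK huv hLC i]
    push_cast
    ring
  rw [key]
  rw [add_assoc]
  congr 1
  -- compute the bOne sum
  have hS1 : (∑ i ∈ Finset.range (d + 1),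
      (fNum (bOne K u v) i : Polynomial ℤ) * X ^ i * (1 - X) ^ (d - i))
      = ∑ j ∈ Finset.range (d - 1), (fNum L j : Polynomial ℤ) * X ^ (j + 1) * (1 - X) ^ (d - 1 - j) := by
    rw [Finset.sum_range_succ']
    rw [bOne_zero]
    simp only [Nat.cast_zero, zero_mul]
    rw [add_zero]
    have hd' : d = (d - 1) + 1 := by omega
    rw [hd', Finset.sum_range_succ]
    have hvan : fNum (bOne K u v) (d - 1 + 1) = 0 := by
      rw [bOne_card K u v hK huv]
      exact hLvanish (d - 1) (by omega)
    rw [hvan]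
    simp only [Nat.cast_zero, zero_mul]
    rw [add_zero]
    apply Finset.sum_congr rfl
    intro j hj
    rw [Finset.mem_range] at hj
    rw [bOne_card K u v hK huv]
    congr 2
    omega
  -- compute the cBoth sum
  have hS2 : (∑ i ∈ Finset.range (d + 1),
      (fNum (cBoth K u v) i : Polynomial ℤ) * X ^ i * (1 - X) ^ (d - i))
      = ∑ j ∈ Finset.range (d - 1), (fNum L j : Polynomial ℤ) * X ^ (j + 2) * (1 - X) ^ (d - 2 - j) := by
    rw [Finset.sum_range_succ']
    rw [cBoth_zero]
    simp only [Nat.cast_zero, zero_mul]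
    rw [add_zero]
    have hd' : d = (d - 1) + 1 := by omega
    rw [hd', Finset.sum_range_succ']
    rw [cBoth_one K u v huv]
    simp only [Nat.cast_zero, zero_mul]
    rw [add_zero]
    apply Finset.sum_congr rfl
    intro j hj
    rw [Finset.mem_range] at hj
    rw [show j + 1 + 1 = j + 2 by omega, cBoth_card K u v hK huv]
    congr 2
    omega
  rw [hS1, hS2]
  -- RHS
  have hRHS : X * hPoly L (d - 2)
      = ∑ j ∈ Finset.range (d - 1), (fNum L j : Polynomial ℤ) * X ^ (j + 1) * (1 - X) ^ (d - 2 - j) := by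
    rw [hPoly, Finset.mul_sum]
    rw [show d - 2 + 1 = d - 1 by omega]
    apply Finset.sum_congr rfl
    intro j _
    rw [pow_succ]
    ring
  rw [hRHS, ← Finset.sum_add_distrib]
  apply Finset.sum_congr rfl
  intro j hj
  rw [Finset.mem_range] at hj
  rw [show d - 1 - j = (d - 2 - j) + 1 by omega]
  rw [pow_succ, pow_succ]
  ring
end
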